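/- arXiv:math/0305434 — 9 statements merged into one kernel-verified Lean document; each statement's English description precedes it below -/
import Mathlib

section
/- Matrix mutation preserves the rank of a matrix: if B̃ is an m×n integer matrix with skew-symmetrizable principal part and B̃' is obtained from B̃ by matrix mutation in direction k ∈ [1,n], then rank(B̃') = rank(B̃). -/
/-!
Mutation in direction `k` factors as `B' = E B F`, where `E` adds `(b_ik)⁺` times row `k` to each
row `i ≠ k` and negates row `k`, and `F` adds `(b_kj)⁻` times column `k` to each column `j ≠ k`
and negates column `k` (the matrices `E_ε`, `F_ε` with `ε = -1` of Berenstein–Fomin–Zelevinsky).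
This rests on `b_kk = 0` and on `(|a| c + a |c|) / 2 = a⁺ c + a c⁻`. Both factors have the form
`1 + u vᵀ` with `vᵀ u = -2`, so they are involutions, hence invertible, and the rank is preserved.
-/

open Matrix

section OneAddVecMulVec

variable {l m R : Type*} [Fintype m] [DecidableEq m] [CommRing R]

theorem one_add_vecMulVec_mul_self {u v : m → R} (h : v ⬝ᵥ u = -2) :
    (1 + vecMulVec u v) * (1 + vecMulVec u v) = 1 := by
  rw [Matrix.add_mul, Matrix.mul_add, Matrix.mul_add, vecMulVec_mul_vecMulVec, h, vecMulVec_smul,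
    neg_smul, two_smul, Matrix.one_mul, Matrix.mul_one, Matrix.one_mul]
  abel

theorem isUnit_det_one_add_vecMulVec {u v : m → R} (h : v ⬝ᵥ u = -2) :
    IsUnit (1 + vecMulVec u v).det :=
  isUnit_det_of_left_inverse (one_add_vecMulVec_mul_self h)

theorem one_add_vecMulVec_single_mul (w : m → R) (r : m) (C : Matrix m l R) :
    (1 + vecMulVec w (Pi.single r 1)) * C = C + vecMulVec w (C r) := by
  rw [Matrix.add_mul, Matrix.one_mul, vecMulVec_mul, single_one_vecMul, row]

theorem mul_one_add_vecMulVec_single [Fintype l] (C : Matrix l m R) (k : m) (z : m → R) :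
    C * (1 + vecMulVec (Pi.single k 1) z) = C + vecMulVec (Cᵀ k) z := by
  rw [Matrix.mul_add, Matrix.mul_one, mul_vecMulVec, mulVec_single_one, col]

end OneAddVecMulVec

theorem abs_mul_add_mul_abs_eq_two_mul {α : Type*} [CommRing α] [LinearOrder α] [IsOrderedRing α]
    (a c : α) : |a| * c + a * |c| = 2 * (a⁺ * c + a * c⁻) := by
  linear_combination (-c) * posPart_add_negPart a + (-c) * posPart_sub_negPart a
    - a * posPart_add_negPart c + a * posPart_sub_negPart c

/-- Mutation in direction `k ∈ [1,n]` of an `m × n` integer matrix whose rows are indexed by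
`Fin n ⊕ Fin p` (the first `n` rows forming the principal part). -/
def extMatrixMutation {n p : ℕ} (B : Matrix (Fin n ⊕ Fin p) (Fin n) ℤ) (k : Fin n) :
    Matrix (Fin n ⊕ Fin p) (Fin n) ℤ :=
  fun i j =>
    if i = Sum.inl k ∨ j = k then -B i j
    else B i j + (|B i k| * B (Sum.inl k) j + B i k * |B (Sum.inl k) j|) / 2

section Factorization

variable {n p : ℕ} (B : Matrix (Fin n ⊕ Fin p) (Fin n) ℤ) (k : Fin n)

def mutationLeftFactor : Matrix (Fin n ⊕ Fin p) (Fin n ⊕ Fin p) ℤ :=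
  1 + vecMulVec (Function.update (fun i => (B i k)⁺) (Sum.inl k) (-2)) (Pi.single (Sum.inl k) 1)

def mutationRightFactor : Matrix (Fin n) (Fin n) ℤ :=
  1 + vecMulVec (Pi.single k 1) (Function.update (fun j => (B (Sum.inl k) j)⁻) k (-2))

theorem isUnit_det_mutationLeftFactor : IsUnit (mutationLeftFactor B k).det :=
  isUnit_det_one_add_vecMulVec (by simp)

theorem isUnit_det_mutationRightFactor : IsUnit (mutationRightFactor B k).det :=
  isUnit_det_one_add_vecMulVec (by simp)

theorem extMatrixMutation_eq_mul_mul (hk : B (Sum.inl k) k = 0) :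
    extMatrixMutation B k = mutationLeftFactor B k * B * mutationRightFactor B k := by
  ext i j
  rw [mutationLeftFactor, mutationRightFactor, one_add_vecMulVec_single_mul,
    mul_one_add_vecMulVec_single]
  simp only [Matrix.add_apply, vecMulVec_apply, transpose_apply, hk, mul_zero, add_zero]
  by_cases hi : i = Sum.inl k
  · subst hi
    rw [extMatrixMutation, if_pos (Or.inl rfl), Function.update_self, hk, zero_mul]
    ring
  by_cases hj : j = k
  · subst hj
    rw [extMatrixMutation, if_pos (Or.inr rfl), Function.update_self, hk, mul_zero]
    ring
  rw [extMatrixMutation, if_neg (by tauto), Function.update_of_ne hi, Function.update_of_ne hj,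
    abs_mul_add_mul_abs_eq_two_mul, Int.mul_ediv_cancel_left _ two_ne_zero]
  ring

end Factorization

theorem rank_extMatrixMutation_general {n p : ℕ} (B : Matrix (Fin n ⊕ Fin p) (Fin n) ℤ) (k : Fin n)
    (hdiag : ∀ i : Fin n, B (Sum.inl i) i = 0) :
    (extMatrixMutation B k).rank = B.rank := by
  rw [extMatrixMutation_eq_mul_mul B k (hdiag k),
    rank_mul_eq_left_of_isUnit_det _ _ (isUnit_det_mutationRightFactor B k),
    rank_mul_eq_right_of_isUnit_det _ _ (isUnit_det_mutationLeftFactor B k)]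

/-- Matrix mutation preserves the rank of an `m × n` integer matrix with
skew-symmetrizable principal part. -/
theorem rank_extMatrixMutation {n p : ℕ} (B : Matrix (Fin n ⊕ Fin p) (Fin n) ℤ) (k : Fin n)
    (hdiag : ∀ i : Fin n, B (Sum.inl i) i = 0)
    (hskew : ∃ d : Fin n → ℤ, (∀ i, 0 < d i) ∧
      ∀ i j : Fin n, d i * B (Sum.inl i) j = -(d j * B (Sum.inl j) i)) :
    (extMatrixMutation B k).rank = B.rank :=
  rank_extMatrixMutation_general B k hdiag
end

section
/- Let I be a finite nonempty set, i ↦ i⁺ a cyclic permutation of I, and (u_i), (v_i) commuting indeterminates (elements of a commutative ring). Then the sum over all subsets J ⊆ I with J ∩ J⁺ = ∅ of (−1)^{|J|} · ∏_{i ∈ I − (J ∪ J⁺)} (u_i + v_i) · ∏_{j ∈ J} (u_j v_{j⁺}) equals ∏_{i ∈ I} u_i + ∏_{i ∈ I} v_i. -/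
open Finset

/-- Alternating sum over a powerset, in any comm ring. -/
lemma alt_sum_powerset {α : Type*} [DecidableEq α] {R : Type*} [CommRing R] (s : Finset α) :
    (∑ t ∈ s.powerset, (-1 : R) ^ t.card) = if s = ∅ then 1 else 0 := by
  have h := Finset.prod_add (fun _ : α => (-1 : R)) (fun _ => 1) s
  simp only [neg_add_cancel, Finset.prod_const, one_pow, mul_one] at h
  rw [← h]
  simp [zero_pow_eq, Finset.card_eq_zero]

/-- The algebraic identity (6.2): for a cyclic permutation `σ` of a finite nonempty set `I`
and commuting indeterminates `u i`, `v i`,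
`∑_{J ⊆ I, J ∩ σ(J) = ∅} (-1)^{|J|} ∏_{i ∉ J ∪ σ(J)} (u i + v i) ∏_{j ∈ J} u j v_{σ j}
  = ∏ u i + ∏ v i`. -/
theorem cyclic_identity {I : Type*} [Fintype I] [DecidableEq I] [Nonempty I]
    {R : Type*} [CommRing R] (σ : Equiv.Perm I)
    (hσ : ∀ i j : I, ∃ m : ℕ, (σ ^ m) i = j)
    (u v : I → R) :
    ∑ J ∈ Finset.univ.filter (fun J : Finset I => Disjoint J (J.image σ)),
      ((-1 : R) ^ J.card *
        ∏ i ∈ Finset.univ \ (J ∪ J.image σ), (u i + v i)) *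
        ∏ j ∈ J, (u j * v (σ j)) =
    (∏ i, u i) + ∏ i, v i := by
  classical
  -- term associated to a set A
  set F : Finset I → R := fun A => (∏ i ∈ A, u i) * ∏ i ∈ Finset.univ \ A, v i with hF
  -- Step 1: expand each product of (u i + v i)
  have step1 : ∀ J ∈ Finset.univ.filter (fun J : Finset I => Disjoint J (J.image σ)),
      ((-1 : R) ^ J.card *
        ∏ i ∈ Finset.univ \ (J ∪ J.image σ), (u i + v i)) *
        ∏ j ∈ J, (u j * v (σ j))
      = ∑ S ∈ (Finset.univ \ (J ∪ J.image σ)).powerset, (-1 : R) ^ J.card * F (J ∪ S) := by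
    intro J hJ
    rw [Finset.mem_filter] at hJ
    have hd : Disjoint J (J.image σ) := hJ.2
    rw [Finset.prod_add, Finset.mul_sum, Finset.sum_mul]
    refine Finset.sum_congr rfl fun S hS => ?_
    rw [Finset.mem_powerset] at hS
    have hSJ : Disjoint J S := by
      refine Finset.disjoint_left.mpr fun x hx hxS => ?_
      have := hS hxS
      simp only [Finset.mem_sdiff, Finset.mem_union] at this
      exact this.2 (Or.inl hx)
    have hSσ : Disjoint S (J.image σ) := by
      refine Finset.disjoint_left.mpr fun x hx hxσ => ?_
      have := hS hx
      simp only [Finset.mem_sdiff, Finset.mem_union] at this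
      exact this.2 (Or.inr hxσ)
    have hu : ∏ j ∈ J, (u j * v (σ j)) = (∏ j ∈ J, u j) * ∏ i ∈ J.image σ, v i := by
      rw [Finset.prod_image (fun a _ b _ h => σ.injective h), Finset.prod_mul_distrib]
    have hset : (Finset.univ \ (J ∪ J.image σ)) \ S ∪ J.image σ
        = Finset.univ \ (J ∪ S) := by
      ext x
      simp only [Finset.mem_union, Finset.mem_sdiff, Finset.mem_univ, true_and]
      constructor
      · rintro (⟨h1, h2⟩ | h1)
        · push_neg at h1 ⊢; exact ⟨h1.1, h2⟩
        · refine ?_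
          push_neg
          exact ⟨fun hx => Finset.disjoint_left.mp hd hx h1,
                 fun hx => Finset.disjoint_left.mp hSσ hx h1⟩
      · intro hx
        push_neg at hx
        by_cases hxσ : x ∈ J.image σ
        · exact Or.inr hxσ
        · exact Or.inl ⟨by push_neg; exact ⟨hx.1, hxσ⟩, hx.2⟩
    have hdisj2 : Disjoint ((Finset.univ \ (J ∪ J.image σ)) \ S) (J.image σ) := by
      refine Finset.disjoint_left.mpr fun x hx hxσ => ?_
      simp only [Finset.mem_sdiff, Finset.mem_union] at hx
      exact hx.1.2 (Or.inr hxσ)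
    rw [hu, hF]
    calc ((-1 : R) ^ J.card * ((∏ i ∈ S, u i) * ∏ i ∈ (Finset.univ \ (J ∪ J.image σ)) \ S, v i))
          * ((∏ j ∈ J, u j) * ∏ i ∈ J.image σ, v i)
        = (-1 : R) ^ J.card * (((∏ i ∈ J, u i) * ∏ i ∈ S, u i) *
            ((∏ i ∈ (Finset.univ \ (J ∪ J.image σ)) \ S, v i) * ∏ i ∈ J.image σ, v i)) := by
          ring
      _ = (-1 : R) ^ J.card * ((∏ i ∈ J ∪ S, u i) * ∏ i ∈ Finset.univ \ (J ∪ S), v i) := by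
          rw [← Finset.prod_union hSJ, ← Finset.prod_union hdisj2, hset]
  rw [Finset.sum_congr rfl step1]
  -- Step 2: reindex the double sum
  rw [Finset.sum_sigma']
  have step2 :
      (∑ p ∈ (Finset.univ.filter (fun J : Finset I => Disjoint J (J.image σ))).sigma
          (fun J => (Finset.univ \ (J ∪ J.image σ)).powerset),
        (-1 : R) ^ p.1.card * F (p.1 ∪ p.2))
      = ∑ q ∈ (Finset.univ : Finset (Finset I)).sigma
          (fun A => (A.filter fun i => σ i ∉ A).powerset),
        (-1 : R) ^ q.2.card * F q.1 := by
    refine Finset.sum_nbij' (fun p => ⟨p.1 ∪ p.2, p.1⟩) (fun q => ⟨q.2, q.1 \ q.2⟩) ?_ ?_ ?_ ?_ ?_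
    · rintro ⟨J, S⟩ hp
      simp only [Finset.mem_sigma, Finset.mem_filter, Finset.mem_powerset, Finset.mem_univ,
        true_and] at hp ⊢
      obtain ⟨hd, hS⟩ := hp
      intro x hx
      simp only [Finset.mem_filter, Finset.mem_union] at hx ⊢
      refine ⟨Or.inl hx, fun hmem => ?_⟩
      have hxσ : σ x ∈ J.image σ := Finset.mem_image_of_mem σ hx
      rcases hmem with h | h
      · exact Finset.disjoint_left.mp hd h hxσ
      · have := hS h
        simp only [Finset.mem_sdiff, Finset.mem_union] at this
        exact this.2 (Or.inr hxσ)
    · rintro ⟨A, J⟩ hq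
      simp only [Finset.mem_sigma, Finset.mem_filter, Finset.mem_powerset, Finset.mem_univ,
        true_and] at hq ⊢
      have hJA : J ⊆ A := fun x hx => (Finset.mem_filter.mp (hq hx)).1
      have hJout : ∀ x ∈ J, σ x ∉ A := fun x hx => (Finset.mem_filter.mp (hq hx)).2
      constructor
      · refine Finset.disjoint_left.mpr fun x hx hxσ => ?_
        obtain ⟨y, hy, rfl⟩ := Finset.mem_image.mp hxσ
        exact hJout y hy (hJA hx)
      · intro x hx
        simp only [Finset.mem_sdiff] at hx
        simp only [Finset.mem_sdiff, Finset.mem_union, Finset.mem_univ, true_and]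
        push_neg
        refine ⟨fun h => hx.2 h, fun hxσ => ?_⟩
        obtain ⟨y, hy, rfl⟩ := Finset.mem_image.mp hxσ
        exact hJout y hy hx.1
    · rintro ⟨J, S⟩ hp
      simp only [Finset.mem_sigma, Finset.mem_filter, Finset.mem_powerset, Finset.mem_univ,
        true_and] at hp
      obtain ⟨hd, hS⟩ := hp
      have hSJ : Disjoint J S := by
        refine Finset.disjoint_left.mpr fun x hx hxS => ?_
        have := hS hxS
        simp only [Finset.mem_sdiff, Finset.mem_union] at this
        exact this.2 (Or.inl hx)
      simp only [Sigma.mk.inj_iff, heq_eq_eq]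
      exact ⟨trivial, by rw [Finset.union_sdiff_cancel_left hSJ]⟩
    · rintro ⟨A, J⟩ hq
      simp only [Finset.mem_sigma, Finset.mem_filter, Finset.mem_powerset, Finset.mem_univ,
        true_and] at hq
      have hJA : J ⊆ A := fun x hx => (Finset.mem_filter.mp (hq hx)).1
      simp only [Sigma.mk.inj_iff, heq_eq_eq]
      exact ⟨Finset.union_sdiff_of_subset hJA, trivial⟩
    · rintro ⟨J, S⟩ _; rfl
  rw [step2, Finset.sum_sigma]
  -- Step 3: collapse inner sums
  have step3 : ∀ A : Finset I,
      (∑ J ∈ (A.filter fun i => σ i ∉ A).powerset, (-1 : R) ^ J.card * F A)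
      = (if (A.filter fun i => σ i ∉ A) = ∅ then 1 else 0) * F A := by
    intro A
    rw [← Finset.sum_mul, alt_sum_powerset]
  rw [Finset.sum_congr rfl fun A _ => step3 A]
  -- Step 4: only A = ∅ and A = univ survive
  have inv_eq : ∀ A : Finset I, (A.filter fun i => σ i ∉ A) = ∅ ↔ (A = ∅ ∨ A = Finset.univ) := by
    intro A
    constructor
    · intro h
      have hinv : ∀ i ∈ A, σ i ∈ A := by
        intro i hi
        by_contra hc
        exact Finset.notMem_empty i (h ▸ Finset.mem_filter.mpr ⟨hi, hc⟩)
      rcases A.eq_empty_or_nonempty with h0 | ⟨i₀, hi₀⟩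
      · exact Or.inl h0
      · refine Or.inr (Finset.eq_univ_of_forall fun j => ?_)
        obtain ⟨m, hm⟩ := hσ i₀ j
        have : ∀ n : ℕ, (σ ^ n) i₀ ∈ A := by
          intro n
          induction n with
          | zero => simpa using hi₀
          | succ k ih => rw [pow_succ', Equiv.Perm.mul_apply]; exact hinv _ ih
        exact hm ▸ this m
    · rintro (rfl | rfl) <;> simp [Finset.filter_eq_empty_iff]
  have huniv : (Finset.univ : Finset I) ≠ (∅ : Finset I) := by
    simp [← Finset.nonempty_iff_ne_empty, Finset.univ_nonempty]
  calc (∑ A : Finset I, (if (A.filter fun i => σ i ∉ A) = ∅ then 1 else 0) * F A)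
      = ∑ A ∈ Finset.univ.filter (fun A : Finset I => (A.filter fun i => σ i ∉ A) = ∅), F A := by
        rw [Finset.sum_filter]
        exact Finset.sum_congr rfl fun A _ => by split <;> simp
    _ = ∑ A ∈ ({Finset.univ, ∅} : Finset (Finset I)), F A := by
        congr 1
        ext A
        simp only [Finset.mem_filter, Finset.mem_univ, true_and, Finset.mem_insert,
          Finset.mem_singleton, inv_eq A]
        tauto
    _ = (∏ i, u i) + ∏ i, v i := by
        rw [Finset.sum_insert (by simpa using huniv)]
        simp [hF]
end

section
/- If a and b are positive integers with at least one of them even, then there exist polynomials F, G in ℤ[x₁,…,x_m] (with complex coefficients suffices) and an integer c ≥ 0 such that F·(Lᵃ + Mᵃ) + G·(Lᵇ + Mᵇ) = Lᶜ, where L and M are monomials in disjoint sets of variables; consequently any common factor of Lᵃ + Mᵃ and Lᵇ + Mᵇ in ℂ[x₁,…,x_m] is a monomial. -/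
/-!
Write `L`, `M` for the two monomials. If `w ^ a = w ^ b = -1` with `a`, `b` coprime, then
`w ^ 2 = 1`, so `w ^ a = 1` or `w ^ b = 1` as one exponent is even, which is absurd. Applied to
`w = M(x) / L(x)`, this shows that `L` vanishes on the common zeros of `Lᵃ + Mᵃ` and `Lᵇ + Mᵇ`,
so by the Nullstellensatz a power `Lᶜ` lies in the ideal they generate. A common factor then
divides the monomial `Lᶜ`, hence is itself a monomial.
-/

open MvPolynomial

theorem neg_one_eq_one_of_pow_eq_neg_one {M : Type*} [Monoid M] [HasDistribNeg M] {w : M}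
    {a b : ℕ} (hab : a.Coprime b) (hodd : ¬(Odd a ∧ Odd b)) (ha : w ^ a = -1)
    (hb : w ^ b = -1) : (-1 : M) = 1 := by
  have hsq : w ^ 2 = 1 := by
    refine (pow_eq_one_iff_of_coprime hab).1 ⟨?_, ?_⟩
    · rw [← pow_mul, mul_comm, pow_mul, ha, neg_one_sq]
    · rw [← pow_mul, mul_comm, pow_mul, hb, neg_one_sq]
  have pow_even_eq_one {n : ℕ} (hn : Even n) : w ^ n = 1 := by
    obtain ⟨k, rfl⟩ := hn
    rw [← two_mul, pow_mul, hsq, one_pow]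
  rcases Nat.even_or_odd a with ha' | ha'
  · rw [← ha, pow_even_eq_one ha']
  · rw [← hb, pow_even_eq_one (Nat.not_odd_iff_even.1 fun hb' => hodd ⟨ha', hb'⟩)]

theorem eq_zero_of_pow_add_pow_eq_zero {K : Type*} [Field K] (hK : ringChar K ≠ 2) {a b : ℕ}
    (hab : a.Coprime b) (hodd : ¬(Odd a ∧ Odd b)) {u v : K} (ha : u ^ a + v ^ a = 0)
    (hb : u ^ b + v ^ b = 0) : u = 0 := by
  by_contra hu
  have div_pow_eq_neg_one {n : ℕ} (hn : u ^ n + v ^ n = 0) : (v / u) ^ n = -1 := by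
    rw [div_pow, div_eq_iff (pow_ne_zero n hu)]
    linear_combination hn
  exact Ring.neg_one_ne_one_of_char_ne_two hK <|
    neg_one_eq_one_of_pow_eq_neg_one hab hodd (div_pow_eq_neg_one ha) (div_pow_eq_neg_one hb)

theorem MvPolynomial.exists_mul_add_mul_eq_pow_of_eval_eq_zero {K σ : Type*} [Field K]
    [IsAlgClosed K] [Finite σ] {p q f : MvPolynomial σ K}
    (h : ∀ x : σ → K, eval x p = 0 → eval x q = 0 → eval x f = 0) :
    ∃ (F G : MvPolynomial σ K) (c : ℕ), F * p + G * q = f ^ c := by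
  have hf : f ∈ (Ideal.span {p, q}).radical := by
    rw [← vanishingIdeal_zeroLocus_eq_radical (K := K), mem_vanishingIdeal_iff]
    intro x hx
    simp only [mem_zeroLocus_iff] at hx ⊢
    exact h x (hx p (Ideal.subset_span (by simp))) (hx q (Ideal.subset_span (by simp)))
  obtain ⟨c, hc⟩ := hf
  obtain ⟨F, G, hFG⟩ := Ideal.mem_span_pair.1 hc
  exact ⟨F, G, c, hFG⟩

theorem common_factor_is_monomial_general (m : ℕ) (sL sM : Fin m →₀ ℕ)
    (a b : ℕ) (hab : Nat.Coprime a b)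
    (hodd : ¬(Odd a ∧ Odd b)) :
    (∃ (F G : MvPolynomial (Fin m) ℂ) (c : ℕ),
        F * ((monomial sL (1 : ℂ)) ^ a + (monomial sM (1 : ℂ)) ^ a) +
          G * ((monomial sL (1 : ℂ)) ^ b + (monomial sM (1 : ℂ)) ^ b) =
        (monomial sL (1 : ℂ)) ^ c) ∧
    (∀ D : MvPolynomial (Fin m) ℂ,
        D ∣ (monomial sL (1 : ℂ)) ^ a + (monomial sM (1 : ℂ)) ^ a →
        D ∣ (monomial sL (1 : ℂ)) ^ b + (monomial sM (1 : ℂ)) ^ b →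
        ∃ (s : Fin m →₀ ℕ) (z : ℂ), D = monomial s z) := by
  obtain ⟨F, G, c, hFG⟩ := exists_mul_add_mul_eq_pow_of_eval_eq_zero
    (p := monomial sL 1 ^ a + monomial sM 1 ^ a) (q := monomial sL 1 ^ b + monomial sM 1 ^ b)
    (f := monomial sL (1 : ℂ)) fun x ha hb => by
      simp only [map_add, map_pow] at ha hb
      exact eq_zero_of_pow_add_pow_eq_zero (by simp [ringChar.eq_zero]) hab hodd ha hb
  refine ⟨⟨F, G, c, hFG⟩, fun D hDa hDb => ?_⟩
  have hD : D ∣ monomial (c • sL) 1 := by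
    rw [← one_pow c, ← monomial_pow, ← hFG]
    exact dvd_add (dvd_mul_of_dvd_right hDa F) (dvd_mul_of_dvd_right hDb G)
  obtain ⟨s, z, -, -, rfl⟩ := dvd_monomial_one_iff_exists.1 hD
  exact ⟨s, z, rfl⟩

/-- If `L`, `M` are nonconstant monomials (with coefficient 1) in disjoint sets of the
variables, and `a`, `b` are coprime positive integers not both odd, then
`F·(Lᵃ + Mᵃ) + G·(Lᵇ + Mᵇ) = Lᶜ` for some polynomials `F`, `G` and some `c ≥ 0`;
consequently any common factor of `Lᵃ + Mᵃ` and `Lᵇ + Mᵇ` is a monomial. -/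
theorem common_factor_is_monomial (m : ℕ) (sL sM : Fin m →₀ ℕ)
    (hL : sL ≠ 0) (hM : sM ≠ 0) (hdisj : Disjoint sL.support sM.support)
    (a b : ℕ) (ha : 0 < a) (hb : 0 < b) (hab : Nat.Coprime a b)
    (hodd : ¬(Odd a ∧ Odd b)) :
    (∃ (F G : MvPolynomial (Fin m) ℂ) (c : ℕ),
        F * ((monomial sL (1 : ℂ)) ^ a + (monomial sM (1 : ℂ)) ^ a) +
          G * ((monomial sL (1 : ℂ)) ^ b + (monomial sM (1 : ℂ)) ^ b) =
        (monomial sL (1 : ℂ)) ^ c) ∧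
    (∀ D : MvPolynomial (Fin m) ℂ,
        D ∣ (monomial sL (1 : ℂ)) ^ a + (monomial sM (1 : ℂ)) ^ a →
        D ∣ (monomial sL (1 : ℂ)) ^ b + (monomial sM (1 : ℂ)) ^ b →
        ∃ (s : Fin m →₀ ℕ) (z : ℂ), D = monomial s z) :=
  common_factor_is_monomial_general m sL sM a b hab hodd
end

section
/- An element y of the ambient field F belongs to ZP[x₁, x'₁, x₂^{±1},…,x_n^{±1}] if and only if y can be written as y = Σ_{m=-N}^{N} c_m x₁^m with each c_m ∈ ZP[x₂^{±1},…,x_n^{±1}] and c_{-m} divisible by P₁^m in ZP[x₂^{±1},…,x_n^{±1}] for m = 1,…,N. -/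
open MvPolynomial

/-- The image of the variable `xᵢ` in the field of rational functions over `R`. -/
noncomputable def Xfrac (R : Type*) [CommRing R] [IsDomain R] (n : ℕ) (i : Fin n) :
    FractionRing (MvPolynomial (Fin n) R) :=
  algebraMap (MvPolynomial (Fin n) R) _ (MvPolynomial.X i)

/-!
Write `x' = P / x`. Since `x * x' = P` lies in the coefficient algebra `S`, every monomial
`x ^ i * x' ^ j` equals `P ^ min i j` times `x ^ (i - j)` or `x' ^ (j - i)`. Hence `S[x, x']` is
the `S`-span of the elements `P ^ max (-m) 0 * x ^ m` for `m : ℤ` (that is, of `x ^ m` and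
`x' ^ m = P ^ m * x ^ (-m)` for `m ≥ 0`), and membership in that span is exactly the stated
expansion with `P ^ m ∣ c (-m)`.
-/

section LaurentExchange

variable {K : Type*} [Field K]

theorem pow_mul_div_pow_eq_pow_mul_zpow {x : K} (hx : x ≠ 0) (b : K) (i j : ℕ) :
    x ^ i * (b / x) ^ j = b ^ j * x ^ ((i : ℤ) - j) := by
  rw [div_pow, zpow_sub₀ hx, zpow_natCast, zpow_natCast]
  ring

variable {A : Type*} [CommSemiring A] [Algebra A K]

theorem Algebra.adjoin_pair_div_eq_span (a : A) {x : K} (hx : x ≠ 0) :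
    Subalgebra.toSubmodule (Algebra.adjoin A {x, algebraMap A K a / x}) =
      Submodule.span A (Set.range fun m : ℤ => a ^ (-m).toNat • x ^ m) := by
  rw [Algebra.adjoin_eq_span]
  apply le_antisymm
  · rw [Submodule.span_le]
    intro z hz
    obtain ⟨i, j, rfl⟩ := (Submonoid.mem_closure_pair _ _ _).mp hz
    have h : x ^ i * (algebraMap A K a / x) ^ j =
        a ^ min i j • (a ^ (-((i : ℤ) - j)).toNat • x ^ ((i : ℤ) - j)) := by
      rw [pow_mul_div_pow_eq_pow_mul_zpow hx, smul_smul, ← pow_add, Algebra.smul_def, map_pow,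
        show min i j + (-((i : ℤ) - j)).toNat = j by omega]
    rw [SetLike.mem_coe, h]
    exact Submodule.smul_mem _ _ (Submodule.subset_span ⟨_, rfl⟩)
  · rw [Submodule.span_le]
    rintro _ ⟨m, rfl⟩
    refine Submodule.subset_span
      ((Submonoid.mem_closure_pair _ _ _).mpr ⟨m.toNat, (-m).toNat, ?_⟩)
    rw [pow_mul_div_pow_eq_pow_mul_zpow hx, show (m.toNat : ℤ) - (-m).toNat = m by omega]
    simp only [Algebra.smul_def, map_pow]

variable {R : Type*} [CommSemiring R] [Algebra R K]

theorem Subalgebra.mem_span_range_laurent_iff (S : Subalgebra R K) (P : S) (x y : K) :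
    y ∈ Submodule.span S (Set.range fun m : ℤ => P ^ (-m).toNat • x ^ m) ↔
      ∃ (N : ℕ) (c : ℤ → K),
        (∀ m : ℤ, c m ∈ S) ∧
        (∀ m : ℕ, 1 ≤ m → m ≤ N → ∃ d ∈ S, c (-(m : ℤ)) = d * (P : K) ^ m) ∧
        y = ∑ m ∈ Finset.Icc (-(N : ℤ)) (N : ℤ), c m * x ^ m := by
  have smul_eq (d : S) (m : ℤ) :
      d • (P ^ (-m).toNat • x ^ m) = d * (P : K) ^ (-m).toNat * x ^ m := by
    simp [Subalgebra.smul_def, mul_assoc]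
  constructor
  · intro hy
    obtain ⟨f, rfl⟩ := Finsupp.mem_span_range_iff_exists_finsupp.mp hy
    set N := f.support.sup Int.natAbs
    have hsupp : f.support ⊆ Finset.Icc (-(N : ℤ)) N := by
      intro m hm
      have := Finset.le_sup (f := Int.natAbs) hm
      rw [Finset.mem_Icc]
      omega
    refine ⟨N, fun m => f m * (P : K) ^ (-m).toNat,
      fun m => mul_mem (f m).2 (pow_mem P.2 _), fun m _ _ => ⟨f (-m), (f _).2, by simp⟩, ?_⟩
    rw [Finsupp.sum_of_support_subset f hsupp (fun m (a : S) => a • (P ^ (-m).toNat • x ^ m))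
      fun m _ => zero_smul _ _]
    exact Finset.sum_congr rfl fun m _ => smul_eq _ _
  · rintro ⟨N, c, hc, hdiv, rfl⟩
    refine Submodule.sum_mem _ fun m hm => ?_
    obtain ⟨d, hd, hcd⟩ : ∃ d ∈ S, c m = d * (P : K) ^ (-m).toNat := by
      rcases le_or_gt 0 m with h | h
      · exact ⟨c m, hc m, by simp [Int.toNat_eq_zero.mpr (neg_nonpos.mpr h)]⟩
      · rw [Finset.mem_Icc] at hm
        obtain ⟨k, rfl⟩ : ∃ k : ℕ, m = -(k : ℤ) := ⟨(-m).toNat, by omega⟩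
        simpa using hdiv k (by omega) (by omega)
    rw [hcd, ← smul_eq ⟨d, hd⟩]
    exact Submodule.smul_mem _ _ (Submodule.subset_span ⟨m, rfl⟩)

theorem Algebra.mem_adjoin_insert_div_union_iff {s : Set K} {x P : K} (hx : x ≠ 0)
    (hP : P ∈ Algebra.adjoin R s) (y : K) :
    y ∈ Algebra.adjoin R (({x, P / x} : Set K) ∪ s) ↔
      ∃ (N : ℕ) (c : ℤ → K),
        (∀ m : ℤ, c m ∈ Algebra.adjoin R s) ∧
        (∀ m : ℕ, 1 ≤ m → m ≤ N →
          ∃ d ∈ Algebra.adjoin R s, c (-(m : ℤ)) = d * P ^ m) ∧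
        y = ∑ m ∈ Finset.Icc (-(N : ℤ)) (N : ℤ), c m * x ^ m := by
  rw [Set.union_comm, Algebra.adjoin_union_eq_adjoin_adjoin, Subalgebra.mem_restrictScalars,
    ← Subalgebra.mem_toSubmodule]
  exact (SetLike.ext_iff.mp
    (Algebra.adjoin_pair_div_eq_span (⟨P, hP⟩ : Algebra.adjoin R s) hx) y).trans
    (Subalgebra.mem_span_range_laurent_iff _ ⟨P, hP⟩ x y)

end LaurentExchange

namespace MvPolynomial

variable {σ R : Type*} [CommSemiring R] {s : Set σ}

theorem monomial_mem_supported {w : σ →₀ ℕ} (hw : ↑w.support ⊆ s) (r : R) :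
    monomial w r ∈ supported R s := by
  rw [monomial_eq]
  refine mul_mem (Subalgebra.algebraMap_mem _ r) (Subalgebra.prod_mem _ fun i hi => pow_mem ?_ _)
  exact Algebra.subset_adjoin ⟨i, hw hi, rfl⟩

theorem algebraMap_mem_adjoin_of_mem_supported {B : Type*} [CommSemiring B] [Algebra R B]
    [Algebra (MvPolynomial σ R) B] [IsScalarTower R (MvPolynomial σ R) B]
    {p : MvPolynomial σ R} (hp : p ∈ supported R s) :
    algebraMap _ B p ∈
      Algebra.adjoin R ((fun i => algebraMap (MvPolynomial σ R) B (X i)) '' s) := by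
  have := (Subalgebra.mem_map (f := IsScalarTower.toAlgHom R (MvPolynomial σ R) B)).mpr
    ⟨p, hp, rfl⟩
  rwa [supported_eq_adjoin_X, AlgHom.map_adjoin, Set.image_image] at this

end MvPolynomial

/-- An element `y` of the ambient field lies in `ZP[x₁, x'₁, x₂^{±1},…,x_n^{±1}]`
(where `x₁ x'₁ = P₁` is the exchange relation) if and only if `y = Σ_{m=-N}^N c_m x₁^m`
with each `c_m` a Laurent polynomial in `x₂,…,x_n` and `c_{-m}` divisible by `P₁^m`
there for `m = 1,…,N`. -/
theorem mem_lower_iff_laurent_divisible (R : Type*) [CommRing R] [IsDomain R] (n : ℕ)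
    (P : MvPolynomial (Fin (n + 1)) R)
    (hP : ∃ (s t : Fin (n + 1) →₀ ℕ) (p q : Rˣ),
      P = monomial s (p : R) + monomial t (q : R) ∧ s 0 = 0 ∧ t 0 = 0) :
    letI F := FractionRing (MvPolynomial (Fin (n + 1)) R)
    let X : Fin (n + 1) → F := Xfrac R (n + 1)
    let aP : F := algebraMap (MvPolynomial (Fin (n + 1)) R) F P
    let x₁' : F := aP / X 0
    let S : Subalgebra R F := Algebra.adjoin R
      (⋃ i ∈ {i : Fin (n + 1) | i ≠ 0}, ({X i, (X i)⁻¹} : Set F))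
    ∀ y : F,
      (y ∈ Algebra.adjoin R (({X 0, x₁'} : Set F) ∪
        ⋃ i ∈ {i : Fin (n + 1) | i ≠ 0}, ({X i, (X i)⁻¹} : Set F))) ↔
      ∃ (N : ℕ) (c : ℤ → F),
        (∀ m : ℤ, c m ∈ S) ∧
        (∀ m : ℕ, 1 ≤ m → m ≤ N → ∃ d ∈ S, c (-(m : ℤ)) = d * aP ^ m) ∧
        y = ∑ m ∈ Finset.Icc (-(N : ℤ)) (N : ℤ), c m * (X 0) ^ m := by
  obtain ⟨u, v, p, q, hPuv, hu, hv⟩ := hP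
  intro X aP x₁' S y
  have hX0 : X 0 ≠ 0 := (map_ne_zero_iff _ (IsFractionRing.injective _ _)).mpr (X_ne_zero 0)
  have support_subset {w : Fin (n + 1) →₀ ℕ} (hw : w 0 = 0) :
      ↑w.support ⊆ {i : Fin (n + 1) | i ≠ 0} := by
    rintro i hi rfl
    exact Finsupp.mem_support_iff.mp hi hw
  have hP : P ∈ supported R {i | i ≠ 0} := hPuv ▸
    add_mem (monomial_mem_supported (support_subset hu) _)
      (monomial_mem_supported (support_subset hv) _)
  have haP : aP ∈ S := by
    refine Algebra.adjoin_mono ?_ (algebraMap_mem_adjoin_of_mem_supported hP)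
    rintro _ ⟨i, hi, rfl⟩
    exact Set.mem_biUnion hi (Set.mem_insert _ _)
  exact Algebra.mem_adjoin_insert_div_union_iff hX0 haP y
end

section
/- Rank-2 lemma: with exchange relations x₁x'₁ = q₂x₂^c + r₂ and x₂x'₂ = q₁x₁^b + r₁ (q_i, r_i invertible coefficients, b, c positive integers), one has ZP[x₁, x₂^{±1}] ∩ ZP[x₁^{±1}, x₂, x'₂] = ZP[x₁, x₂, x'₂], where the intersection is taken inside the field of rational functions in x₁, x₂. -/
open MvPolynomial

/-!
Evaluating `X ↦ x₁`, `T ↦ x₂` embeds the Laurent polynomials `R[X][T;T⁻¹]` into the field, and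
`R[x₁, x₂^{±1}]` lies in the image. With `P = q₁ X^b + r₁`, so that `x₂' = P(x₁) / x₂`, the algebra
`R[x₁, x₂, x₂']` is the image of `R[X][T, P T⁻¹]`, the Laurent polynomials whose coefficient of
`T^(-k)` is divisible by `P^k`, and `R[x₁^{±1}, x₂, x₂']` is its localization at `x₁`. So an element
`z` of the intersection has `x₁^N z ∈ R[x₁, x₂, x₂']`; since `P(0) = r₁` is a unit, `X^N` is coprime
to `P^k`, and the divisibility conditions pass from the coefficients of `X^N z` to those of `z`.
-/

open scoped Polynomial LaurentPolynomial

theorem Polynomial.isCoprime_X_of_isUnit_coeff_zero {A : Type*} [CommRing A] {p : A[X]}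
    (h : IsUnit (p.coeff 0)) : IsCoprime Polynomial.X p := by
  obtain ⟨q, hq⟩ := Polynomial.X_dvd_sub_C (p := p)
  rw [sub_eq_iff_eq_add'.mp hq, IsCoprime.add_mul_left_right_iff]
  exact isCoprime_one_right.of_isCoprime_of_dvd_right (Polynomial.isUnit_C.mpr h).dvd

theorem Polynomial.aeval_mem_adjoin_insert {R A : Type*} [CommSemiring R] [CommSemiring A]
    [Algebra R A] (x : A) (s : Set A) (p : R[X]) :
    Polynomial.aeval x p ∈ Algebra.adjoin R (insert x s) :=
  Algebra.adjoin_mono (Set.singleton_subset_iff.mpr (Set.mem_insert x s))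
    (Polynomial.aeval_mem_adjoin_singleton R x)

theorem Algebra.exists_pow_mul_mem_adjoin_of_mem_adjoin_insert {R S : Type*} [CommSemiring R]
    [CommSemiring S] [Algebra R S] {T : Set S} {s t y : S} (hst : s * t = 1)
    (hs : s ∈ adjoin R T) (hy : y ∈ adjoin R (insert t T)) : ∃ N : ℕ, s ^ N * y ∈ adjoin R T := by
  induction hy using Algebra.adjoin_induction with
  | mem z hz =>
    rcases hz with rfl | hz
    · exact ⟨1, by rw [pow_one, hst]; exact one_mem _⟩
    · exact ⟨0, by rw [pow_zero, one_mul]; exact subset_adjoin hz⟩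
  | algebraMap r => exact ⟨0, by rw [pow_zero, one_mul]; exact algebraMap_mem _ r⟩
  | add z w _ _ hz hw =>
    obtain ⟨N, hN⟩ := hz
    obtain ⟨M, hM⟩ := hw
    refine ⟨N + M, ?_⟩
    rw [show s ^ (N + M) * (z + w) = s ^ M * (s ^ N * z) + s ^ N * (s ^ M * w) by ring]
    exact add_mem (mul_mem (pow_mem hs _) hN) (mul_mem (pow_mem hs _) hM)
  | mul z w _ _ hz hw =>
    obtain ⟨N, hN⟩ := hz
    obtain ⟨M, hM⟩ := hw
    exact ⟨N + M, by rw [pow_add, mul_mul_mul_comm]; exact mul_mem hN hM⟩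

namespace LaurentPolynomial

theorem eval₂_injective {A S : Type*} [CommRing A] [CommRing S] {f : A →+* S} {x : Sˣ}
    (h : Function.Injective (Polynomial.eval₂ f (x : S))) :
    Function.Injective (eval₂ f x) := by
  rw [injective_iff_map_eq_zero]
  intro p hp
  obtain ⟨n, q, hq⟩ := p.exists_T_pow
  have hq0 : q = 0 :=
    h (by rw [← eval₂_toLaurent, hq, map_mul, hp, zero_mul, Polynomial.eval₂_zero])
  rwa [hq0, map_zero, eq_comm, (isUnit_T _).mul_left_eq_zero] at hq

variable {A : Type*} [CommRing A]

def powDvdCoeff (p : A) : Subalgebra A A[T;T⁻¹] where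
  carrier := {f | ∀ m : ℤ, p ^ (-m).toNat ∣ f.coeff m}
  mul_mem' {f g} hf hg m := by
    classical
    rw [AddMonoidAlgebra.coeff_mul]
    refine Finset.dvd_sum fun i _ => Finset.dvd_sum fun j _ => ?_
    dsimp only
    split_ifs with hij
    · subst hij
      exact (pow_dvd_pow p (by omega)).trans (pow_add p _ _ ▸ mul_dvd_mul (hf i) (hg j))
    · exact dvd_zero _
  add_mem' hf hg m := dvd_add (hf m) (hg m)
  algebraMap_mem' a m := by
    rw [algebraMap_apply, Algebra.algebraMap_self_apply, ← single_eq_C,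
      AddMonoidAlgebra.coeff_single, Finsupp.single_apply]
    split_ifs with hm
    · simp [← hm]
    · exact dvd_zero _

variable {p : A}

theorem single_mem_powDvdCoeff {m : ℤ} {a : A} (h : p ^ (-m).toNat ∣ a) :
    AddMonoidAlgebra.single m a ∈ powDvdCoeff p := fun n => by
  rw [AddMonoidAlgebra.coeff_single, Finsupp.single_apply]
  split_ifs with hmn
  · exact hmn ▸ h
  · exact dvd_zero _

theorem C_mem_powDvdCoeff (a : A) : C a ∈ powDvdCoeff p :=
  single_mem_powDvdCoeff (by simp)

theorem T_mem_powDvdCoeff {n : ℤ} (hn : 0 ≤ n) : T n ∈ powDvdCoeff p :=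
  single_mem_powDvdCoeff (by simp [Int.toNat_eq_zero.mpr (neg_nonpos.mpr hn)])

theorem C_mul_T_neg_one_mem_powDvdCoeff : C p * T (-1) ∈ powDvdCoeff p := by
  rw [← single_eq_C_mul_T]
  exact single_mem_powDvdCoeff (by simp)

theorem mem_powDvdCoeff_of_smul_mem {a : A} (ha : IsCoprime a p) {f : A[T;T⁻¹]}
    (h : a • f ∈ powDvdCoeff p) : f ∈ powDvdCoeff p := fun m =>
  ha.pow_right.symm.dvd_of_dvd_mul_left (h m)

theorem C_pow_mul_T_eq (p : A) (m : ℤ) :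
    C (p ^ (-m).toNat) * T m = T 1 ^ m.toNat * (C p * T (-1)) ^ (-m).toNat := by
  rw [mul_pow, T_pow, T_pow, map_pow, mul_left_comm, ← T_add]
  congr 2
  omega

end LaurentPolynomial

section Exchange

variable {R K : Type*} [CommRing R] [Field K] [Algebra R K]

variable (R) in
noncomputable def laurentAeval (x : K) {y : K} (hy : y ≠ 0) : R[X][T;T⁻¹] →ₐ[R] K :=
  { LaurentPolynomial.eval₂ (Polynomial.aeval x).toRingHom (Units.mk0 y hy) with
    commutes' r := by simp [LaurentPolynomial.algebraMap_apply] }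

variable {x y : K} (hy : y ≠ 0)

theorem laurentAeval_C (p : R[X]) :
    laurentAeval R x hy (LaurentPolynomial.C p) = Polynomial.aeval x p :=
  LaurentPolynomial.eval₂_C _ _ _

theorem laurentAeval_T (n : ℤ) : laurentAeval R x hy (LaurentPolynomial.T n) = y ^ n := by
  simp [laurentAeval]

theorem laurentAeval_injective (hxy : Function.Injective (Polynomial.aevalAeval (R := R) x y)) :
    Function.Injective (laurentAeval R x hy) := by
  refine LaurentPolynomial.eval₂_injective ?_
  convert hxy using 1
  ext p
  induction p using Polynomial.induction_on' with
  | add p q hp hq => simp only [Polynomial.eval₂_add, map_add, hp, hq]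
  | monomial n a => simp

theorem adjoin_le_range_laurentAeval :
    Algebra.adjoin R {x, y, y⁻¹} ≤ (laurentAeval R x hy).range := by
  refine Algebra.adjoin_le ?_
  rintro _ (rfl | rfl | rfl)
  · exact (AlgHom.mem_range _).mpr ⟨_, by rw [laurentAeval_C, Polynomial.aeval_X]⟩
  · exact (AlgHom.mem_range _).mpr ⟨_, by rw [laurentAeval_T, zpow_one]⟩
  · exact (AlgHom.mem_range _).mpr ⟨_, by rw [laurentAeval_T, zpow_neg_one]⟩

theorem adjoin_eq_map_powDvdCoeff (p : R[X]) :
    Algebra.adjoin R {x, y, Polynomial.aeval x p / y} =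
      ((LaurentPolynomial.powDvdCoeff p).restrictScalars R).map (laurentAeval R x hy) := by
  apply le_antisymm
  · refine Algebra.adjoin_le ?_
    rintro _ (rfl | rfl | rfl)
    · exact Subalgebra.mem_map.mpr ⟨_, LaurentPolynomial.C_mem_powDvdCoeff Polynomial.X,
        by rw [laurentAeval_C, Polynomial.aeval_X]⟩
    · exact Subalgebra.mem_map.mpr ⟨_, LaurentPolynomial.T_mem_powDvdCoeff zero_le_one,
        by rw [laurentAeval_T, zpow_one]⟩
    · exact Subalgebra.mem_map.mpr ⟨_, LaurentPolynomial.C_mul_T_neg_one_mem_powDvdCoeff,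
        by rw [map_mul, laurentAeval_C, laurentAeval_T, zpow_neg_one, div_eq_mul_inv]⟩
  · intro z hz
    obtain ⟨f, hf, rfl⟩ := Subalgebra.mem_map.mp hz
    rw [← f.sum_coeff_single, Finsupp.sum, map_sum]
    refine Subalgebra.sum_mem _ fun m _ => ?_
    obtain ⟨c, hc⟩ := hf m
    rw [hc, mul_comm (p ^ _) c, LaurentPolynomial.single_eq_C_mul_T,
      map_mul LaurentPolynomial.C, mul_assoc, LaurentPolynomial.C_pow_mul_T_eq]
    simp only [map_mul, map_pow, laurentAeval_C, laurentAeval_T, zpow_one, zpow_neg_one,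
      ← div_eq_mul_inv]
    refine mul_mem (Polynomial.aeval_mem_adjoin_insert x _ c)
      (mul_mem (pow_mem ?_ _) (pow_mem ?_ _)) <;> exact Algebra.subset_adjoin (by simp)

theorem adjoin_inf_adjoin_eq_adjoin_exchange [Nontrivial R]
    (hxy : Function.Injective (Polynomial.aevalAeval (R := R) x y)) {p : R[X]}
    (hp : IsCoprime Polynomial.X p) :
    Algebra.adjoin R {x, y, y⁻¹} ⊓ Algebra.adjoin R {x, x⁻¹, y, Polynomial.aeval x p / y} =
      Algebra.adjoin R {x, y, Polynomial.aeval x p / y} := by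
  have hx : x ≠ 0 := fun h => Polynomial.C_ne_zero.mpr Polynomial.X_ne_zero
    (hxy (by rw [Polynomial.aevalAeval_X, h, map_zero]))
  have hy : y ≠ 0 := fun h => Polynomial.X_ne_zero
    (hxy (by rw [Polynomial.aevalAeval_Y, h, map_zero]))
  apply le_antisymm
  · rintro z ⟨hzA, hzB⟩
    rw [Set.insert_comm] at hzB
    obtain ⟨N, hN⟩ := Algebra.exists_pow_mul_mem_adjoin_of_mem_adjoin_insert
      (mul_inv_cancel₀ hx) (Algebra.subset_adjoin (Set.mem_insert _ _)) hzB
    obtain ⟨f, rfl⟩ := (AlgHom.mem_range _).mp (adjoin_le_range_laurentAeval hy hzA)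
    rw [adjoin_eq_map_powDvdCoeff hy] at hN ⊢
    obtain ⟨g, hg, hgf⟩ := Subalgebra.mem_map.mp hN
    have hXf : (Polynomial.X ^ N : R[X]) • f = g := by
      refine laurentAeval_injective hy hxy ?_
      rw [hgf, LaurentPolynomial.smul_eq_C_mul, map_mul, laurentAeval_C, map_pow,
        Polynomial.aeval_X]
    exact Subalgebra.mem_map.mpr
      ⟨f, LaurentPolynomial.mem_powDvdCoeff_of_smul_mem hp.pow_left (hXf ▸ hg), rfl⟩
  refine le_inf (Algebra.adjoin_le ?_) (Algebra.adjoin_mono (by simp [Set.subset_def]))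
  rintro _ (rfl | rfl | rfl)
  · exact Algebra.subset_adjoin (by simp)
  · exact Algebra.subset_adjoin (by simp)
  · rw [div_eq_mul_inv]
    exact mul_mem (Polynomial.aeval_mem_adjoin_insert _ _ p) (Algebra.subset_adjoin (by simp))

end Exchange

theorem injective_aevalAeval_Xfrac (R : Type*) [CommRing R] [IsDomain R] :
    Function.Injective (Polynomial.aevalAeval (R := R) (Xfrac R 2 0) (Xfrac R 2 1)) := by
  have h : Polynomial.aevalAeval (R := R) (Xfrac R 2 0) (Xfrac R 2 1) =
      (IsScalarTower.toAlgHom R (MvPolynomial (Fin 2) R) _).comp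
        (Polynomial.Bivariate.equivMvPolynomial R).toAlgHom := by
    ext <;> simp [Xfrac]
  rw [h]
  exact (IsFractionRing.injective _ _).comp (Polynomial.Bivariate.equivMvPolynomial R).injective

/-- Rank-2 lemma: with the exchange relation `x₂ x'₂ = q₁ x₁^b + r₁`, one has
`ZP[x₁, x₂^{±1}] ∩ ZP[x₁^{±1}, x₂, x'₂] = ZP[x₁, x₂, x'₂]` inside the field of rational
functions in `x₁, x₂`. -/
theorem rank_two_intersection (R : Type*) [CommRing R] [IsDomain R]
    (q₁ r₁ : Rˣ) (b : ℕ) (hb : 0 < b) :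
    letI F := FractionRing (MvPolynomial (Fin 2) R)
    let x₁ : F := Xfrac R 2 0
    let x₂ : F := Xfrac R 2 1
    let x₂' : F := (algebraMap R F (q₁ : R) * x₁ ^ b + algebraMap R F (r₁ : R)) / x₂
    Algebra.adjoin R ({x₁, x₂, x₂⁻¹} : Set F) ⊓
      Algebra.adjoin R ({x₁, x₁⁻¹, x₂, x₂'} : Set F) =
    Algebra.adjoin R ({x₁, x₂, x₂'} : Set F) := by
  intro x₁ x₂ x₂'
  let P : R[X] := Polynomial.C (q₁ : R) * Polynomial.X ^ b + Polynomial.C (r₁ : R)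
  have hP : IsCoprime Polynomial.X P :=
    Polynomial.isCoprime_X_of_isUnit_coeff_zero (by simp [P, hb.ne])
  have hx₂' : x₂' = Polynomial.aeval x₁ P / x₂ := by simp [x₂', P]
  rw [hx₂']
  exact adjoin_inf_adjoin_eq_adjoin_exchange (injective_aevalAeval_Xfrac R) hP
end

section
/- Rank-2 lemma: with the exchange relation x₂x'₂ = q₁x₁^b + r₁ (q₁, r₁ invertible, b a positive integer), one has ZP[x₁, x'₁, x₂^{±1}] = ZP[x₁, x'₁, x₂, x'₂] + ZP[x₁, x₂^{±1}], where x'₁ = (q₂x₂^c + r₂)/x₁ (q₂, r₂ invertible, c a positive integer). -/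
open MvPolynomial

/-- Rank-2 lemma: with exchange relations `x₁ x'₁ = q₂ x₂^c + r₂` and
`x₂ x'₂ = q₁ x₁^b + r₁`, one has
`ZP[x₁, x'₁, x₂^{±1}] = ZP[x₁, x'₁, x₂, x'₂] + ZP[x₁, x₂^{±1}]` (a sum of submodules). -/
theorem rank_two_sum_decomposition (R : Type*) [CommRing R] [IsDomain R]
    (q₁ r₁ q₂ r₂ : Rˣ) (b c : ℕ) (hb : 0 < b) (hc : 0 < c) :
    letI F := FractionRing (MvPolynomial (Fin 2) R)
    let x₁ : F := Xfrac R 2 0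
    let x₂ : F := Xfrac R 2 1
    let x₁' : F := (algebraMap R F (q₂ : R) * x₂ ^ c + algebraMap R F (r₂ : R)) / x₁
    let x₂' : F := (algebraMap R F (q₁ : R) * x₁ ^ b + algebraMap R F (r₁ : R)) / x₂
    Subalgebra.toSubmodule (Algebra.adjoin R ({x₁, x₁', x₂, x₂⁻¹} : Set F)) =
      Subalgebra.toSubmodule (Algebra.adjoin R ({x₁, x₁', x₂, x₂'} : Set F)) ⊔
      Subalgebra.toSubmodule (Algebra.adjoin R ({x₁, x₂, x₂⁻¹} : Set F)) := by
  intro x₁ x₂ x₁' x₂'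
  set g := algebraMap R (FractionRing (MvPolynomial (Fin 2) R)) with hg
  have hx1d : x₁ = Xfrac R 2 0 := rfl
  have hx2d : x₂ = Xfrac R 2 1 := rfl
  have hx1'd : x₁' = (g (q₂ : R) * x₂ ^ c + g (r₂ : R)) / x₁ := rfl
  have hx2'd : x₂' = (g (q₁ : R) * x₁ ^ b + g (r₁ : R)) / x₂ := rfl
  clear_value x₁ x₂ x₁' x₂'
  obtain ⟨b, rfl⟩ : ∃ n, b = n + 1 := ⟨b - 1, (Nat.succ_pred_eq_of_pos hb).symm⟩
  have hx₁ : x₁ ≠ 0 := by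
    rw [hx1d]
    exact (map_ne_zero_iff _ (IsFractionRing.injective _ _)).mpr (X_ne_zero 0)
  have hx₂ : x₂ ≠ 0 := by
    rw [hx2d]
    exact (map_ne_zero_iff _ (IsFractionRing.injective _ _)).mpr (X_ne_zero 1)
  have hinv : g (↑r₁⁻¹) * g (↑r₁) = 1 := by rw [← map_mul]; simp
  have ex₁ : x₁ * x₁' = g ↑q₂ * x₂ ^ c + g ↑r₂ := by
    rw [hx1'd]; field_simp
  have ex₂ : x₂ * x₂' = g ↑q₁ * x₁ ^ (b + 1) + g ↑r₁ := by
    rw [hx2'd]; field_simp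
  have hx₂'val : x₂' = (g ↑q₁ * x₁ ^ (b + 1) + g ↑r₁) * x₂⁻¹ := by
    rw [hx2'd, div_eq_mul_inv]
  have inv_eq : x₂⁻¹ = g ↑r₁⁻¹ * x₂' - g ↑r₁⁻¹ * g ↑q₁ * (x₁ ^ (b + 1) * x₂⁻¹) := by
    rw [hx₂'val]
    have h2 : x₂ * x₂⁻¹ = 1 := mul_inv_cancel₀ hx₂
    linear_combination (-x₂⁻¹) * hinv
  have step : ∀ i j s k m : ℕ,
      x₁ ^ i * x₁' ^ (j + 1) * x₂' ^ s * x₂ ^ k * (x₂⁻¹) ^ (m + 1)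
        = (↑r₁⁻¹ : R) • (x₁ ^ i * x₁' ^ (j + 1) * x₂' ^ (s + 1) * x₂ ^ k * (x₂⁻¹) ^ m)
          - ((↑r₁⁻¹ * ↑q₁ * ↑q₂ : R)) • (x₁ ^ (i + b) * x₁' ^ j * x₂' ^ s * x₂ ^ (k + c) * (x₂⁻¹) ^ (m + 1))
          - ((↑r₁⁻¹ * ↑q₁ * ↑r₂ : R)) • (x₁ ^ (i + b) * x₁' ^ j * x₂' ^ s * x₂ ^ k * (x₂⁻¹) ^ (m + 1)) := by
    intro i j s k m
    simp only [Algebra.smul_def, map_mul, ← hg]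
    linear_combination (x₁ ^ i * x₁' ^ (j + 1) * x₂' ^ s * x₂ ^ k * (x₂⁻¹) ^ m) * inv_eq
      - (g ↑r₁⁻¹ * g ↑q₁ * x₁ ^ (i + b) * x₁' ^ j * x₂' ^ s * x₂ ^ k * (x₂⁻¹) ^ (m + 1)) * ex₁
  set B := Algebra.adjoin R ({x₁, x₁', x₂, x₂'} : Set (FractionRing (MvPolynomial (Fin 2) R))) with hB
  set C := Algebra.adjoin R ({x₁, x₂, x₂⁻¹} : Set (FractionRing (MvPolynomial (Fin 2) R))) with hC
  set A := Algebra.adjoin R ({x₁, x₁', x₂, x₂⁻¹} : Set (FractionRing (MvPolynomial (Fin 2) R))) with hA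
  have hx₁B : x₁ ∈ B := Algebra.subset_adjoin (by simp)
  have hx₁'B : x₁' ∈ B := Algebra.subset_adjoin (by simp)
  have hx₂B : x₂ ∈ B := Algebra.subset_adjoin (by simp)
  have hx₂'B : x₂' ∈ B := Algebra.subset_adjoin (by simp)
  have hx₁C : x₁ ∈ C := Algebra.subset_adjoin (by simp)
  have hx₂C : x₂ ∈ C := Algebra.subset_adjoin (by simp)
  have hx₂iC : x₂⁻¹ ∈ C := Algebra.subset_adjoin (by simp)
  have hx₂'C : x₂' ∈ C := by
    rw [hx₂'val]
    exact mul_mem (add_mem (mul_mem (C.algebraMap_mem _) (pow_mem hx₁C _)) (C.algebraMap_mem _)) hx₂iC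
  have key : ∀ j i s k m : ℕ, x₁ ^ i * x₁' ^ j * x₂' ^ s * x₂ ^ k * (x₂⁻¹) ^ m ∈
      Subalgebra.toSubmodule B ⊔ Subalgebra.toSubmodule C := by
    intro j
    induction j with
    | zero =>
      intro i s k m
      refine Submodule.mem_sup_right ?_
      show _ ∈ C
      simp only [pow_zero, mul_one]
      exact mul_mem (mul_mem (mul_mem (pow_mem hx₁C i) (pow_mem hx₂'C s)) (pow_mem hx₂C k))
        (pow_mem hx₂iC m)
    | succ j ih =>
      intro i s k m
      induction m generalizing s with
      | zero =>
        refine Submodule.mem_sup_left ?_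
        show _ ∈ B
        simp only [pow_zero, mul_one]
        exact mul_mem (mul_mem (mul_mem (pow_mem hx₁B i) (pow_mem hx₁'B (j + 1)))
          (pow_mem hx₂'B s)) (pow_mem hx₂B k)
      | succ m ihm =>
        rw [step i j s k m]
        exact sub_mem (sub_mem (Submodule.smul_mem _ _ (ihm (s + 1)))
          (Submodule.smul_mem _ _ (ih (i + b) s (k + c) (m + 1))))
          (Submodule.smul_mem _ _ (ih (i + b) s k (m + 1)))
  apply le_antisymm
  · rw [hA, Algebra.adjoin_eq_span]
    refine Submodule.span_le.mpr ?_
    intro z hz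
    have hform : ∃ i j k m : ℕ, z = x₁ ^ i * x₁' ^ j * x₂ ^ k * (x₂⁻¹) ^ m := by
      induction hz using Submonoid.closure_induction with
      | mem w hw =>
        simp only [Set.mem_insert_iff, Set.mem_singleton_iff] at hw
        rcases hw with h | h | h | h
        · exact ⟨1, 0, 0, 0, by simp [h]⟩
        · exact ⟨0, 1, 0, 0, by simp [h]⟩
        · exact ⟨0, 0, 1, 0, by simp [h]⟩
        · exact ⟨0, 0, 0, 1, by simp [h]⟩
      | one => exact ⟨0, 0, 0, 0, by simp⟩
      | mul x y hx hy hx' hy' =>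
        obtain ⟨i, j, k, m, rfl⟩ := hx'
        obtain ⟨i', j', k', m', rfl⟩ := hy'
        exact ⟨i + i', j + j', k + k', m + m', by ring⟩
    obtain ⟨i, j, k, m, rfl⟩ := hform
    have := key j i 0 k m
    simpa using this
  · refine sup_le ?_ ?_ <;> refine Subalgebra.toSubmodule.monotone (Algebra.adjoin_le ?_)
    · intro w hw
      simp only [Set.mem_insert_iff, Set.mem_singleton_iff] at hw
      rcases hw with h | h | h | h
      · exact h ▸ Algebra.subset_adjoin (by simp)
      · exact h ▸ Algebra.subset_adjoin (by simp)
      · exact h ▸ Algebra.subset_adjoin (by simp)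
      · subst h
        rw [hx₂'val]
        exact mul_mem (add_mem (mul_mem (A.algebraMap_mem _)
          (pow_mem (Algebra.subset_adjoin (by simp)) _)) (A.algebraMap_mem _))
          (Algebra.subset_adjoin (by simp))
    · intro w hw
      simp only [Set.mem_insert_iff, Set.mem_singleton_iff] at hw
      rcases hw with h | h | h
      · exact h ▸ Algebra.subset_adjoin (by simp)
      · exact h ▸ Algebra.subset_adjoin (by simp)
      · exact h ▸ Algebra.subset_adjoin (by simp)
end

section
/- Rank-2 coincidence of upper and lower bounds: with exchange relations x₁x'₁ = P₁(x₂) and x₂x'₂ = P₂(x₁) as above (P₁, P₂ binomials with invertible coefficients and positive exponents, or constants in the degenerate case with P₁ and P₂ coprime), one has ZP[x₁, x'₁, x₂^{±1}] ∩ ZP[x₁^{±1}, x₂, x'₂] = ZP[x₁, x'₁, x₂, x'₂]. -/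
/-!
Work in the Laurent polynomial ring `R[ℤ × ℤ]`, where `single (m, n) a` stands for
`a x₁ ^ m x₂ ^ n`; evaluation at `x₁, x₂` embeds it into the fraction field, so the identity can be
checked there. Put `P₁ = q₂ x₂ ^ c + r₂`, `P₂ = q₁ x₁ ^ b + r₁`, `x₁' = P₁ / x₁`, `x₂' = P₂ / x₂`,
`U = R[x₁, x₁', x₂^{±1}]` and `L = R[x₁^{±1}, x₂, x₂']`.

Filter `U` by the `x₁'`-degree: `U_J` is spanned by the `x₁' ^ j x₁ ^ m x₂ ^ n` with `j ≤ J`.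
Modulo `U_J`, an element of `U_{J+1}` is a combination of the `x₁' ^ (J+1) x₂ ^ n`, and for
`n = -k < 0` such a monomial is congruent to `r₁ ^ (-k) x₁' ^ (J+1) x₂' ^ k ∈ R[x₁, x₁', x₂, x₂']`:
the difference is a multiple of `r₁ ^ k - P₂ ^ k`, hence of `P₂ - r₁ = q₁ x₁ ^ b`, and the factor
`x₁ ^ b` (`b > 0`) lowers the `x₁'`-degree. This reduces an element of `U ∩ L` to one of
`R[x₁, x₂^{±1}] ∩ L`. The same filtration of `L` by the `x₂'`-degree finishes the proof: the top
part `P₂ ^ K w`, with `w` in the row `x₂ ^ (-K)`, has no negative power of `x₁`, hence neither has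
`w`, because multiplication by `P₂` preserves the lowest power of `x₁` (`r₁` is a unit).
Exchanging `x₁` and `x₂` turns `L` into an algebra of the same shape as `U`, so only the
filtration of `U` is needed.
-/

open MvPolynomial

open AddMonoidAlgebra Submodule

namespace RankTwo

variable {R : Type*} [CommRing R]

noncomputable def swap : R[ℤ × ℤ] →ₐ[R] R[ℤ × ℤ] := (domCongr R R AddEquiv.prodComm).toAlgHom

theorem swap_swap (y : R[ℤ × ℤ]) : swap (swap y) = y := by
  ext p; simp [swap]

theorem swap_single (p : ℤ × ℤ) (a : R) : swap (single p a) = single p.swap a := by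
  simp [swap]

theorem swap_mem_supported {s : Set (ℤ × ℤ)} {y : R[ℤ × ℤ]} (hy : y ∈ supported R R s) :
    swap y ∈ supported R R (Prod.swap ⁻¹' s) := by
  intro p hp
  rw [Finset.mem_coe, Finsupp.mem_support_iff] at hp
  exact hy (Finsupp.mem_support_iff.2 (by simpa [swap] using hp))

noncomputable def exch (q r : R) (c : ℕ) : R[ℤ × ℤ] := single (0, (c : ℤ)) q + algebraMap R _ r

noncomputable def upper (q r : R) (c : ℕ) : Subalgebra R R[ℤ × ℤ] :=
  Algebra.adjoin R
    {single (1, 0) 1, exch q r c * single (-1, 0) 1, single (0, 1) 1, single (0, -1) 1}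

noncomputable def upperPoly (q r : R) (c : ℕ) : Subalgebra R R[ℤ × ℤ] :=
  Algebra.adjoin R {single (1, 0) 1, exch q r c * single (-1, 0) 1, single (0, 1) 1}

/-- `exch q r c ^ j * single p 1` is the monomial `x₁' ^ j x₁ ^ (p.1 + j) x₂ ^ p.2`. -/
noncomputable def upperFil (q r : R) (c J : ℕ) : Submodule R R[ℤ × ℤ] :=
  span R {g | ∃ j ≤ J, ∃ p : ℤ × ℤ, -(j : ℤ) ≤ p.1 ∧ exch q r c ^ j * single p 1 = g}

noncomputable def lowerBound (q₁ r₁ q₂ r₂ : R) (b c : ℕ) : Subalgebra R R[ℤ × ℤ] :=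
  Algebra.adjoin R {single (1, 0) 1, exch q₂ r₂ c * single (-1, 0) 1, single (0, 1) 1,
    swap (exch q₁ r₁ b) * single (0, -1) 1}

section Filtration

variable {q r : R} {c : ℕ}

theorem exch_mul_single (p : ℤ × ℤ) :
    exch q r c * single p 1 = q • single (p + (0, (c : ℤ))) 1 + r • single p 1 := by
  simp [exch, add_mul, single_mul_single, coe_algebraMap, smul_single, add_comm]

theorem exch_pow_mul_single_eq (j : ℕ) (p : ℤ × ℤ) :
    exch q r c ^ j * single p 1 =
      (exch q r c * single (-1, 0) 1) ^ j * single (p + ((j : ℤ), 0)) 1 := by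
  rw [mul_pow, single_pow, mul_assoc, single_mul_single, one_pow, one_mul]
  congr 2
  ext <;> simp

theorem exch_mem_gradeBy_fst : exch q r c ∈ gradeBy R (AddMonoidHom.fst ℤ ℤ) 0 := by
  refine add_mem (single_mem_gradeBy _ (0, (c : ℤ)) q) ?_
  simpa [coe_algebraMap] using single_mem_gradeBy (AddMonoidHom.fst ℤ ℤ) 0 r

theorem upperFil_mono {J J' : ℕ} (h : J ≤ J') : upperFil q r c J ≤ upperFil q r c J' :=
  span_mono fun _ ⟨j, hj, p, hp, hg⟩ ↦ ⟨j, hj.trans h, p, hp, hg⟩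

theorem exch_pow_mul_single_mem_upperFil {J j : ℕ} {p : ℤ × ℤ} (hJ : -(J : ℤ) ≤ p.1)
    (hj : -(j : ℤ) ≤ p.1) : exch q r c ^ j * single p 1 ∈ upperFil q r c J := by
  induction j generalizing p with
  | zero => exact subset_span ⟨0, J.zero_le, p, hj, rfl⟩
  | succ j ih =>
    by_cases hjJ : j + 1 ≤ J
    · exact subset_span ⟨j + 1, hjJ, p, hj, rfl⟩
    · have hp : -(j : ℤ) ≤ p.1 := by omega
      rw [pow_succ, mul_assoc, exch_mul_single, mul_add, mul_smul_comm, mul_smul_comm]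
      exact add_mem (smul_mem _ _ (ih (by simpa using hJ) (by simpa using hp)))
        (smul_mem _ _ (ih hJ hp))

theorem single_mem_upperFil_zero {p : ℤ × ℤ} (hp : 0 ≤ p.1) : single p 1 ∈ upperFil q r c 0 :=
  subset_span ⟨0, le_rfl, p, by simpa using hp, by simp⟩

theorem algebraMap_mem_upperFil_zero (a : R) : algebraMap R _ a ∈ upperFil q r c 0 := by
  simpa [coe_algebraMap, smul_single] using
    smul_mem _ a (single_mem_upperFil_zero (q := q) (r := r) (c := c) (p := 0) le_rfl)

theorem swap_exch_mem_upperFil_zero (q' r' : R) (b : ℕ) :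
    swap (exch q' r' b) ∈ upperFil q r c 0 := by
  rw [exch, map_add, swap_single, AlgHom.commutes, ← mul_one q', ← smul_eq_mul, ← smul_single]
  exact add_mem (smul_mem _ _ (single_mem_upperFil_zero (by simp)))
    (algebraMap_mem_upperFil_zero r')

theorem mul_mem_upperFil {J J' : ℕ} {x y : R[ℤ × ℤ]} (hx : x ∈ upperFil q r c J)
    (hy : y ∈ upperFil q r c J') : x * y ∈ upperFil q r c (J + J') := by
  have h := mul_mem_mul hx hy
  rw [upperFil, upperFil, span_mul_span] at h
  refine span_le.2 ?_ h
  rintro _ ⟨_, ⟨j, hj, p, hp, rfl⟩, _, ⟨j', hj', p', hp', rfl⟩, rfl⟩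
  refine subset_span ⟨j + j', by omega, p + p', by simp only [Prod.fst_add]; omega, ?_⟩
  rw [show single (p + p') (1 : R) = single p 1 * single p' 1 by rw [single_mul_single, one_mul],
    pow_add]
  ring

theorem pow_mem_upperFil_zero {x : R[ℤ × ℤ]} (hx : x ∈ upperFil q r c 0) (n : ℕ) :
    x ^ n ∈ upperFil q r c 0 := by
  induction n with
  | zero => rw [pow_zero, AddMonoidAlgebra.one_def]; exact single_mem_upperFil_zero le_rfl
  | succ n ih => simpa [pow_succ] using mul_mem_upperFil ih hx

theorem upperFil_le_supported (J : ℕ) :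
    upperFil q r c J ≤ supported R R {p : ℤ × ℤ | -(J : ℤ) ≤ p.1} := by
  refine span_le.2 ?_
  rintro _ ⟨j, hj, p, hp, rfl⟩ x hx
  have h := SetLike.mul_mem_graded (SetLike.pow_mem_graded j exch_mem_gradeBy_fst)
    (single_mem_gradeBy (AddMonoidHom.fst ℤ ℤ) p 1) x hx
  simp only [smul_zero, zero_add, AddMonoidHom.coe_fst] at h
  simp only [Set.mem_ofPred_eq, h]
  omega

theorem single_mem_upper {p : ℤ × ℤ} (hp : 0 ≤ p.1) : single p 1 ∈ upper q r c := by
  have h : single p (1 : R) = single (1, 0) 1 ^ p.1.toNat * single (0, 1) 1 ^ p.2.toNat *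
      single (0, -1) 1 ^ (-p.2).toNat := by
    simp only [single_pow, single_mul_single, one_pow, mul_one]
    congr 1
    ext <;>
      simp only [Prod.fst_add, Prod.snd_add, Prod.smul_fst, Prod.smul_snd, Int.nsmul_eq_mul] <;>
      omega
  rw [h]
  refine mul_mem (mul_mem (pow_mem ?_ _) (pow_mem ?_ _)) (pow_mem ?_ _) <;>
    exact Algebra.subset_adjoin (by simp)

theorem mem_upper_iff {x : R[ℤ × ℤ]} : x ∈ upper q r c ↔ ∃ J, x ∈ upperFil q r c J := by
  constructor
  · intro hx
    induction hx using Algebra.adjoin_induction with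
    | mem x hx =>
      rcases hx with rfl | rfl | rfl | rfl
      · exact ⟨0, single_mem_upperFil_zero zero_le_one⟩
      · have h := exch_pow_mul_single_mem_upperFil (q := q) (r := r) (c := c) (J := 1) (j := 1)
          (p := (-1, 0)) le_rfl le_rfl
        exact ⟨1, by simpa using h⟩
      · exact ⟨0, single_mem_upperFil_zero le_rfl⟩
      · exact ⟨0, single_mem_upperFil_zero le_rfl⟩
    | algebraMap a => exact ⟨0, algebraMap_mem_upperFil_zero a⟩
    | add x y _ _ hx hy =>
      obtain ⟨J, hx⟩ := hx
      obtain ⟨J', hy⟩ := hy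
      exact ⟨max J J', add_mem (upperFil_mono (le_max_left _ _) hx)
        (upperFil_mono (le_max_right _ _) hy)⟩
    | mul x y _ _ hx hy =>
      obtain ⟨J, hx⟩ := hx
      obtain ⟨J', hy⟩ := hy
      exact ⟨J + J', mul_mem_upperFil hx hy⟩
  · rintro ⟨J, hx⟩
    refine (span_le (p := Subalgebra.toSubmodule (upper q r c))).2 ?_ hx
    rintro _ ⟨j, -, p, hp, rfl⟩
    change _ ∈ upper q r c
    rw [exch_pow_mul_single_eq]
    exact mul_mem (pow_mem (Algebra.subset_adjoin (by simp)) _)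
      (single_mem_upper (by simp only [Prod.fst_add]; omega))

end Filtration

section PolynomialPart

variable {q r : R} {c : ℕ}

theorem mem_supported_of_exch_mul_mem (hr : IsUnit r) (hc : 0 < c) {w : R[ℤ × ℤ]}
    (h : exch q r c * w ∈ supported R R {p : ℤ × ℤ | 0 ≤ p.2}) :
    w ∈ supported R R {p : ℤ × ℤ | 0 ≤ p.2} := by
  intro p hp
  by_contra hneg
  obtain ⟨p₀, hp₀, hmin⟩ := w.coeff.support.exists_min_image (·.2) ⟨p, hp⟩
  have hbelow : w.coeff (-(0, (c : ℤ)) + p₀) = 0 := by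
    by_contra hne
    have := hmin _ (Finsupp.mem_support_iff.2 hne)
    simp only [Prod.snd_add, Prod.snd_neg] at this
    omega
  have hcoeff : (exch q r c * w).coeff p₀ = r * w.coeff p₀ := by
    rw [exch, add_mul, AddMonoidAlgebra.coeff_add, Finsupp.add_apply, coeff_single_mul_apply,
      hbelow, mul_zero, zero_add, ← Algebra.smul_def, coeff_smul_apply, smul_eq_mul]
  have hmem : p₀ ∈ (exch q r c * w).coeff.support := by
    rw [Finsupp.mem_support_iff, hcoeff, Ne, hr.mul_right_eq_zero]
    exact Finsupp.mem_support_iff.1 hp₀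
  have h₀ := h hmem
  have hle := hmin p hp
  simp only [Set.mem_ofPred_eq] at h₀ hneg
  omega

theorem mem_supported_of_exch_pow_mul_mem (hr : IsUnit r) (hc : 0 < c) (k : ℕ)
    {w : R[ℤ × ℤ]} (h : exch q r c ^ k * w ∈ supported R R {p : ℤ × ℤ | 0 ≤ p.2}) :
    w ∈ supported R R {p : ℤ × ℤ | 0 ≤ p.2} := by
  induction k generalizing w with
  | zero => simpa using h
  | succ k ih =>
    rw [pow_succ, mul_assoc] at h
    exact mem_supported_of_exch_mul_mem hr hc (ih h)

theorem single_mem_upperPoly {p : ℤ × ℤ} (hp₁ : 0 ≤ p.1) (hp₂ : 0 ≤ p.2) :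
    single p 1 ∈ upperPoly q r c := by
  have h : single p (1 : R) = single (1, 0) 1 ^ p.1.toNat * single (0, 1) 1 ^ p.2.toNat := by
    rw [single_pow, single_pow, single_mul_single, one_pow, one_pow, one_mul]
    congr 1
    ext <;>
      simp only [Prod.fst_add, Prod.snd_add, Prod.smul_fst, Prod.smul_snd, Int.nsmul_eq_mul] <;>
      omega
  rw [h]
  exact mul_mem (pow_mem (Algebra.subset_adjoin (by simp)) _)
    (pow_mem (Algebra.subset_adjoin (by simp)) _)

theorem exch_pow_mul_mem_upperPoly {k : ℕ} {w : R[ℤ × ℤ]}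
    (hw : w ∈ supported R R {p : ℤ × ℤ | -(k : ℤ) ≤ p.1 ∧ 0 ≤ p.2}) :
    exch q r c ^ k * w ∈ upperPoly q r c := by
  rw [supported_eq_span_single] at hw
  induction hw using span_induction with
  | mem g hg =>
    obtain ⟨p, ⟨hp₁, hp₂⟩, rfl⟩ := hg
    rw [exch_pow_mul_single_eq]
    exact mul_mem (pow_mem (Algebra.subset_adjoin (by simp)) _)
      (single_mem_upperPoly (by simp only [Prod.fst_add]; omega) (by simpa using hp₂))
  | zero => simp
  | add x y _ _ hx hy => rw [mul_add]; exact add_mem hx hy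
  | smul a x _ hx => rw [mul_smul_comm]; exact Subalgebra.smul_mem _ hx a

theorem exists_eq_add_exch_pow_mul {K : ℕ} {y : R[ℤ × ℤ]} (hy : y ∈ upperFil q r c (K + 1)) :
    ∃ y' ∈ upperFil q r c K, ∃ w ∈ gradeBy R (AddMonoidHom.fst ℤ ℤ) (-(K + 1 : ℤ)),
      y = y' + exch q r c ^ (K + 1) * w := by
  induction hy using span_induction with
  | mem g hg =>
    obtain ⟨j, hj, p, hp, rfl⟩ := hg
    by_cases hpK : -(K : ℤ) ≤ p.1
    · exact ⟨_, exch_pow_mul_single_mem_upperFil hpK hp, 0, zero_mem _, by simp⟩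
    · obtain rfl : j = K + 1 := by omega
      have hp₁ : p.1 = -(K + 1 : ℤ) := by omega
      exact ⟨0, zero_mem _, single p 1, hp₁ ▸ single_mem_gradeBy _ p 1, by simp⟩
  | zero => exact ⟨0, zero_mem _, 0, zero_mem _, by simp⟩
  | add x y _ _ hx hy =>
    obtain ⟨x', hx', v, hv, rfl⟩ := hx
    obtain ⟨y', hy', w, hw, rfl⟩ := hy
    exact ⟨x' + y', add_mem hx' hy', v + w, add_mem hv hw, by ring⟩
  | smul a x _ hx =>
    obtain ⟨x', hx', w, hw, rfl⟩ := hx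
    exact ⟨a • x', smul_mem _ a hx', a • w, smul_mem _ a hw, by rw [smul_add, mul_smul_comm]⟩

theorem mem_upperPoly_of_mem_upperFil (hr : IsUnit r) (hc : 0 < c) {K : ℕ} {y : R[ℤ × ℤ]}
    (hy : y ∈ upperFil q r c K) (hy₂ : y ∈ supported R R {p : ℤ × ℤ | 0 ≤ p.2}) :
    y ∈ upperPoly q r c := by
  induction K generalizing y with
  | zero =>
    simpa using exch_pow_mul_mem_upperPoly (q := q) (r := r) (c := c) (k := 0)
      (Set.subset_inter (upperFil_le_supported 0 hy) hy₂)
  | succ K ih =>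
    obtain ⟨y', hy', w, hw, rfl⟩ := exists_eq_add_exch_pow_mul hy
    set z := exch q r c ^ (K + 1) * w
    have hz₁ : z ∈ gradeBy R (AddMonoidHom.fst ℤ ℤ) (-(K + 1 : ℤ)) := by
      simpa using SetLike.mul_mem_graded (SetLike.pow_mem_graded (K + 1) exch_mem_gradeBy_fst) hw
    -- `y'` has no monomial in the column `x₁ ^ -(K+1)`, which carries all of `z`.
    have hz_le : z.coeff.support ⊆ (y' + z).coeff.support := by
      intro p hp
      have hy'p : y'.coeff p = 0 := by
        by_contra hne
        have h₁ := upperFil_le_supported K hy' (Finsupp.mem_support_iff.2 hne)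
        have h₂ := hz₁ p hp
        simp only [Set.mem_ofPred_eq, AddMonoidHom.coe_fst] at h₁ h₂
        omega
      rw [Finsupp.mem_support_iff, AddMonoidAlgebra.coeff_add, Finsupp.add_apply, hy'p, zero_add]
      exact Finsupp.mem_support_iff.1 hp
    have hz₂ : z ∈ supported R R {p : ℤ × ℤ | 0 ≤ p.2} := fun p hp ↦ hy₂ (hz_le hp)
    have hw₂ := mem_supported_of_exch_pow_mul_mem hr hc (K + 1) hz₂
    have hz : z ∈ upperPoly q r c := by
      refine exch_pow_mul_mem_upperPoly fun p hp ↦ ⟨?_, hw₂ hp⟩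
      have hp₁ : p.1 = -(K + 1 : ℤ) := hw p hp
      push_cast
      omega
    exact add_mem (ih hy' (by simpa using sub_mem hy₂ hz₂)) hz

end PolynomialPart

section Intersection

variable {q₁ r₁ q₂ r₂ : R} {b c : ℕ}

theorem lowerBound_le_upper : lowerBound q₁ r₁ q₂ r₂ b c ≤ upper q₂ r₂ c := by
  refine Algebra.adjoin_le ?_
  rintro _ (rfl | rfl | rfl | rfl)
  · exact single_mem_upper zero_le_one
  · exact Algebra.subset_adjoin (by simp)
  · exact single_mem_upper le_rfl
  · exact mul_mem (mem_upper_iff.2 ⟨0, swap_exch_mem_upperFil_zero q₁ r₁ b⟩)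
      (Algebra.subset_adjoin (by simp))

theorem lowerBound_le_comap_swap : lowerBound q₁ r₁ q₂ r₂ b c ≤ (upper q₁ r₁ b).comap swap := by
  refine Algebra.adjoin_le ?_
  rintro _ (rfl | rfl | rfl | rfl) <;>
    simp only [SetLike.mem_coe, Subalgebra.mem_comap, map_mul, swap_single, swap_swap,
      Prod.swap_prod_mk]
  · exact single_mem_upper le_rfl
  · exact mul_mem (mem_upper_iff.2 ⟨0, swap_exch_mem_upperFil_zero q₂ r₂ c⟩)
      (single_mem_upper le_rfl)
  · exact single_mem_upper zero_le_one
  · exact Algebra.subset_adjoin (by simp)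

theorem upperPoly_le_comap_swap :
    upperPoly q₁ r₁ b ≤ (lowerBound q₁ r₁ q₂ r₂ b c).comap swap := by
  refine Algebra.adjoin_le ?_
  rintro _ (rfl | rfl | rfl) <;>
    simp only [SetLike.mem_coe, Subalgebra.mem_comap, map_mul, swap_single, Prod.swap_prod_mk] <;>
    exact Algebra.subset_adjoin (by simp)

theorem upperPoly_le_lowerBound : upperPoly q₂ r₂ c ≤ lowerBound q₁ r₁ q₂ r₂ b c :=
  Algebra.adjoin_mono (by simp [Set.insert_subset_iff])

theorem exists_pow_sub_pow_eq_mul_single (q₁ r₁ : R) (b k : ℕ) : ∃ Q ∈ upperFil q₂ r₂ c 0,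
    algebraMap R _ r₁ ^ k - swap (exch q₁ r₁ b) ^ k = Q * single ((b : ℤ), 0) 1 := by
  have hP₂ : swap (exch q₁ r₁ b) - algebraMap R _ r₁ = q₁ • single ((b : ℤ), 0) 1 := by
    simp [exch, swap_single, smul_single, coe_algebraMap]
  refine ⟨-(q₁ • ∑ i ∈ Finset.range k,
    swap (exch q₁ r₁ b) ^ i * algebraMap R _ r₁ ^ (k - 1 - i)), ?_, ?_⟩
  · refine neg_mem (smul_mem _ _ (sum_mem fun i _ ↦ ?_))
    simpa using mul_mem_upperFil (pow_mem_upperFil_zero (swap_exch_mem_upperFil_zero q₁ r₁ b) i)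
      (pow_mem_upperFil_zero (algebraMap_mem_upperFil_zero r₁) _)
  · rw [← neg_sub, ← geom_sum₂_mul, hP₂]
    simp only [neg_mul, smul_mul_assoc, mul_smul_comm]

theorem exch_pow_succ_mul_single_mem_sup (hr₁ : IsUnit r₁) (hb : 0 < b) (J : ℕ) (n : ℤ) :
    exch q₂ r₂ c ^ (J + 1) * single (-(J + 1 : ℤ), n) 1 ∈
      upperFil q₂ r₂ c J ⊔ Subalgebra.toSubmodule (lowerBound q₁ r₁ q₂ r₂ b c) := by
  set k := (-n).toNat
  set X := exch q₂ r₂ c ^ (J + 1) * single (-(J + 1 : ℤ), n) 1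
  obtain ⟨Q, hQ, hdiv⟩ := exists_pow_sub_pow_eq_mul_single (q₂ := q₂) (r₂ := r₂) (c := c) q₁ r₁ b k
  have hu : (↑hr₁.unit⁻¹ : R) ^ k * r₁ ^ k = 1 := by rw [← mul_pow, hr₁.val_inv_mul, one_pow]
  have hX : X = (↑hr₁.unit⁻¹ : R) ^ k • (swap (exch q₁ r₁ b) ^ k * X) +
      (↑hr₁.unit⁻¹ : R) ^ k • ((algebraMap R _ r₁ ^ k - swap (exch q₁ r₁ b) ^ k) * X) := by
    rw [← smul_add, ← add_mul, add_sub_cancel, ← map_pow, ← Algebra.smul_def, smul_smul, hu,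
      one_smul]
  rw [hX]
  refine add_mem (mem_sup_right (smul_mem _ _ ?_)) (mem_sup_left (smul_mem _ _ ?_))
  · have h : swap (exch q₁ r₁ b) ^ k * X = (exch q₂ r₂ c * single (-1, 0) 1) ^ (J + 1) *
        (swap (exch q₁ r₁ b) * single (0, -1) 1) ^ k * single (0, n + k) 1 := by
      have hs : single (-(J + 1 : ℤ), n) (1 : R) =
          single (-1, 0) 1 ^ (J + 1) * single (0, -1) 1 ^ k * single (0, n + k) 1 := by
        simp only [single_pow, single_mul_single, one_pow, mul_one]
        congr 1
        ext <;> simp [k]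
      simp only [X, hs]
      ring
    rw [Subalgebra.mem_toSubmodule, h]
    refine mul_mem (mul_mem (pow_mem (upperPoly_le_lowerBound (Algebra.subset_adjoin (by simp))) _)
      (pow_mem (Algebra.subset_adjoin (by simp)) _))
      (upperPoly_le_lowerBound (single_mem_upperPoly le_rfl (by simp only [k]; omega)))
  · have h : (algebraMap R _ r₁ ^ k - swap (exch q₁ r₁ b) ^ k) * X =
        Q * (exch q₂ r₂ c ^ (J + 1) * single ((b : ℤ) - (J + 1), n) 1) := by
      rw [hdiv, mul_assoc, mul_left_comm (single _ _), single_mul_single, one_mul]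
      congr 3
      ext <;> simp only [Prod.fst_add, Prod.snd_add] <;> omega
    rw [h]
    simpa using mul_mem_upperFil hQ (exch_pow_mul_single_mem_upperFil
      (by dsimp only; omega) (by dsimp only; omega))

theorem upperFil_succ_le (hr₁ : IsUnit r₁) (hb : 0 < b) (J : ℕ) :
    upperFil q₂ r₂ c (J + 1) ≤
      upperFil q₂ r₂ c J ⊔ Subalgebra.toSubmodule (lowerBound q₁ r₁ q₂ r₂ b c) := by
  refine span_le.2 ?_
  rintro _ ⟨j, hj, ⟨p₁, p₂⟩, hp, rfl⟩
  by_cases hpJ : -(J : ℤ) ≤ p₁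
  · exact mem_sup_left (exch_pow_mul_single_mem_upperFil hpJ hp)
  · obtain rfl : j = J + 1 := by omega
    obtain rfl : p₁ = -(J + 1 : ℤ) := by omega
    exact exch_pow_succ_mul_single_mem_sup hr₁ hb J p₂

theorem upper_inf_comap_swap (hr₁ : IsUnit r₁) (hb : 0 < b) :
    upper q₂ r₂ c ⊓ (upper q₁ r₁ b).comap swap = lowerBound q₁ r₁ q₂ r₂ b c := by
  refine le_antisymm ?_ (le_inf lowerBound_le_upper lowerBound_le_comap_swap)
  rintro y ⟨hyU, hyL⟩
  obtain ⟨J, hJ⟩ := mem_upper_iff.1 hyU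
  induction J generalizing y with
  | zero =>
    obtain ⟨K, hK⟩ := mem_upper_iff.1 hyL
    have hy₂ := swap_mem_supported (upperFil_le_supported 0 hJ)
    have := mem_upperPoly_of_mem_upperFil hr₁ hb hK (by simpa using hy₂)
    simpa [swap_swap] using upperPoly_le_comap_swap (q₂ := q₂) (r₂ := r₂) (c := c) this
  | succ J ih =>
    obtain ⟨u, hu, a, ha, rfl⟩ := mem_sup.1 (upperFil_succ_le hr₁ hb J hJ)
    have huL : u ∈ (upper q₁ r₁ b).comap swap := by
      simpa using sub_mem hyL (lowerBound_le_comap_swap ha)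
    exact add_mem (ih (mem_upper_iff.2 ⟨J, hu⟩) huL hu) ha

end Intersection

section Evaluation

variable {A : Type*} [CommRing A] [Algebra R A]

def monomialHom (x y : Aˣ) : Multiplicative (ℤ × ℤ) →* A where
  toFun p := ↑(x ^ p.toAdd.1 * y ^ p.toAdd.2)
  map_one' := by simp
  map_mul' p p' := by simp [zpow_add, mul_mul_mul_comm]

noncomputable def evalLaurent (x y : Aˣ) : R[ℤ × ℤ] →ₐ[R] A := lift R A (ℤ × ℤ) (monomialHom x y)

variable (x y : Aˣ)

theorem evalLaurent_single (p : ℤ × ℤ) (a : R) :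
    evalLaurent x y (single p a) = algebraMap R A a * ↑(x ^ p.1 * y ^ p.2) := by
  rw [evalLaurent, lift_single, Algebra.smul_def]
  rfl

theorem evalLaurent_exch (q r : R) (c : ℕ) :
    evalLaurent x y (exch q r c) = algebraMap R A q * ↑y ^ c + algebraMap R A r := by
  simp [exch, coe_algebraMap, evalLaurent_single]

theorem evalLaurent_swap (g : R[ℤ × ℤ]) : evalLaurent x y (swap g) = evalLaurent y x g := by
  have h : (evalLaurent x y).comp swap = evalLaurent (R := R) y x :=
    algHom_ext (fun p ↦ by simp [swap_single, evalLaurent_single, mul_comm])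
      (Subsingleton.elim _ _)
  exact AlgHom.congr_fun h g

theorem map_comap_swap (S : Subalgebra R R[ℤ × ℤ]) :
    (S.comap swap).map (evalLaurent x y) = S.map (evalLaurent y x) := by
  ext z
  simp only [Subalgebra.mem_map, Subalgebra.mem_comap]
  exact ⟨fun ⟨g, hg, hz⟩ ↦ ⟨swap g, hg, (evalLaurent_swap y x g).trans hz⟩,
    fun ⟨g, hg, hz⟩ ↦ ⟨swap g, by rwa [swap_swap], (evalLaurent_swap x y g).trans hz⟩⟩

theorem map_upper (q r : R) (c : ℕ) :
    (upper q r c).map (evalLaurent x y) = Algebra.adjoin R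
      {↑x, (algebraMap R A q * ↑y ^ c + algebraMap R A r) * ↑x⁻¹, ↑y, ↑y⁻¹} := by
  simp [upper, AlgHom.map_adjoin, Set.image_insert_eq, evalLaurent_single, evalLaurent_exch]

theorem map_comap_swap_upper (q r : R) (c : ℕ) :
    ((upper q r c).comap swap).map (evalLaurent x y) = Algebra.adjoin R
      {↑x, ↑x⁻¹, ↑y, (algebraMap R A q * ↑x ^ c + algebraMap R A r) * ↑y⁻¹} := by
  rw [map_comap_swap, map_upper]
  congr 1
  ext z
  simp only [Set.mem_insert_iff, Set.mem_singleton_iff]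
  tauto

theorem map_lowerBound (q₁ r₁ q₂ r₂ : R) (b c : ℕ) :
    (lowerBound q₁ r₁ q₂ r₂ b c).map (evalLaurent x y) = Algebra.adjoin R
      {↑x, (algebraMap R A q₂ * ↑y ^ c + algebraMap R A r₂) * ↑x⁻¹, ↑y,
        (algebraMap R A q₁ * ↑x ^ b + algebraMap R A r₁) * ↑y⁻¹} := by
  simp [lowerBound, AlgHom.map_adjoin, Set.image_insert_eq, evalLaurent_single,
    evalLaurent_swap, evalLaurent_exch]

end Evaluation

theorem exists_mul_single_eq_aeval (f : R[ℤ × ℤ]) : ∃ N : ℕ, ∃ g : MvPolynomial (Fin 2) R,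
    f * single ((N : ℤ), (N : ℤ)) 1 = aeval ![single (1, 0) 1, single (0, 1) 1] g := by
  have hdiag (N : ℕ) : single ((N : ℤ), (N : ℤ)) (1 : R) =
      aeval ![single (1, 0) 1, single (0, 1) 1] ((X 0 * X 1 : MvPolynomial (Fin 2) R) ^ N) := by
    simp [single_pow, single_mul_single]
  induction f using induction_linear with
  | zero => exact ⟨0, 0, by simp⟩
  | add f f' hf hf' =>
    obtain ⟨N, g, hg⟩ := hf
    obtain ⟨N', g', hg'⟩ := hf'
    refine ⟨N + N', g * (X 0 * X 1) ^ N' + g' * (X 0 * X 1) ^ N, ?_⟩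
    have hsplit : single (((N + N' : ℕ) : ℤ), ((N + N' : ℕ) : ℤ)) (1 : R) =
        single ((N : ℤ), (N : ℤ)) 1 * single ((N' : ℤ), (N' : ℤ)) 1 := by
      rw [single_mul_single, one_mul]; push_cast; rfl
    rw [map_add, map_mul, map_mul, ← hg, ← hg', ← hdiag, ← hdiag, add_mul, hsplit]
    ring
  | single p a =>
    obtain ⟨N, hN₁, hN₂⟩ : ∃ N : ℕ, -(N : ℤ) ≤ p.1 ∧ -(N : ℤ) ≤ p.2 :=
      ⟨(-p.1).toNat + (-p.2).toNat, by omega, by omega⟩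
    refine ⟨N, C a * X 0 ^ (p.1 + N).toNat * X 1 ^ (p.2 + N).toNat, ?_⟩
    simp only [map_mul, aeval_C, aeval_X, map_pow,
      Matrix.cons_val_zero, Matrix.cons_val_one, single_pow, single_mul_single, coe_algebraMap,
      Function.comp_apply, Algebra.algebraMap_self, RingHom.id_apply, one_pow, mul_one]
    congr 1
    ext <;> simp only [Prod.fst_add, Prod.snd_add, Prod.fst_zero, Prod.snd_zero, Prod.smul_fst,
      Prod.smul_snd, Int.nsmul_eq_mul] <;> omega

theorem evalLaurent_injective [IsDomain R] (hx : Xfrac R 2 0 ≠ 0) (hy : Xfrac R 2 1 ≠ 0) :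
    Function.Injective (evalLaurent (R := R) (Units.mk0 _ hx) (Units.mk0 _ hy)) := by
  have hcomm : (evalLaurent (R := R) (Units.mk0 _ hx) (Units.mk0 _ hy)).comp
      (aeval ![single (1, 0) 1, single (0, 1) 1]) =
        IsScalarTower.toAlgHom R (MvPolynomial (Fin 2) R)
          (FractionRing (MvPolynomial (Fin 2) R)) := by
    refine MvPolynomial.algHom_ext fun i ↦ ?_
    fin_cases i <;> simp [evalLaurent_single, Xfrac]
  rw [injective_iff_map_eq_zero]
  intro f hf
  obtain ⟨N, g, hg⟩ := exists_mul_single_eq_aeval f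
  have hg0 : g = 0 := by
    apply IsFractionRing.injective (MvPolynomial (Fin 2) R) (FractionRing (MvPolynomial (Fin 2) R))
    rw [map_zero, ← IsScalarTower.toAlgHom_apply R, ← hcomm, AlgHom.comp_apply, ← hg, map_mul,
      hf, zero_mul]
  have hunit : single ((N : ℤ), (N : ℤ)) (1 : R) * single (-(N : ℤ), -(N : ℤ)) 1 = 1 := by
    rw [single_mul_single, one_mul, AddMonoidAlgebra.one_def, Prod.mk_add_mk, add_neg_cancel]
    rfl
  rw [← mul_one f, ← hunit, ← mul_assoc, hg, hg0, map_zero, zero_mul]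

end RankTwo

theorem rank_two_upper_eq_lower_general (R : Type*) [CommRing R] [IsDomain R]
    (q₁ r₁ q₂ r₂ : Rˣ) (b c : ℕ) (hb : 0 < b) :
    letI F := FractionRing (MvPolynomial (Fin 2) R)
    let x₁ : F := Xfrac R 2 0
    let x₂ : F := Xfrac R 2 1
    let x₁' : F := (algebraMap R F (q₂ : R) * x₂ ^ c + algebraMap R F (r₂ : R)) / x₁
    let x₂' : F := (algebraMap R F (q₁ : R) * x₁ ^ b + algebraMap R F (r₁ : R)) / x₂
    Algebra.adjoin R ({x₁, x₁', x₂, x₂⁻¹} : Set F) ⊓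
      Algebra.adjoin R ({x₁, x₁⁻¹, x₂, x₂'} : Set F) =
    Algebra.adjoin R ({x₁, x₁', x₂, x₂'} : Set F) := by
  intro x₁ x₂ x₁' x₂'
  have hx (i : Fin 2) : Xfrac R 2 i ≠ 0 :=
    fun h ↦ X_ne_zero i (IsFractionRing.to_map_eq_zero_iff.1 h)
  set u₁ := Units.mk0 x₁ (hx 0)
  set u₂ := Units.mk0 x₂ (hx 1)
  have hU : Algebra.adjoin R ({x₁, x₁', x₂, x₂⁻¹} : Set (FractionRing (MvPolynomial (Fin 2) R))) =
      (RankTwo.upper (q₂ : R) r₂ c).map (RankTwo.evalLaurent u₁ u₂) := by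
    rw [RankTwo.map_upper]
    simp [u₁, u₂, x₁', div_eq_mul_inv]
  have hL : Algebra.adjoin R ({x₁, x₁⁻¹, x₂, x₂'} : Set (FractionRing (MvPolynomial (Fin 2) R))) =
      ((RankTwo.upper (q₁ : R) r₁ b).comap RankTwo.swap).map (RankTwo.evalLaurent u₁ u₂) := by
    rw [RankTwo.map_comap_swap_upper]
    simp [u₁, u₂, x₂', div_eq_mul_inv]
  have hA : Algebra.adjoin R ({x₁, x₁', x₂, x₂'} : Set (FractionRing (MvPolynomial (Fin 2) R))) =
      (RankTwo.lowerBound (q₁ : R) r₁ q₂ r₂ b c).map (RankTwo.evalLaurent u₁ u₂) := by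
    rw [RankTwo.map_lowerBound]
    simp [u₁, u₂, x₁', x₂', div_eq_mul_inv]
  rw [hU, hL, hA, ← Algebra.map_inf _ (RankTwo.evalLaurent_injective (hx 0) (hx 1)),
    RankTwo.upper_inf_comap_swap r₁.isUnit hb]

/-- Rank-2 coincidence of upper and lower bounds: with exchange relations
`x₁ x'₁ = q₂ x₂^c + r₂` and `x₂ x'₂ = q₁ x₁^b + r₁` (invertible coefficients, positive
exponents), one has `ZP[x₁, x'₁, x₂^{±1}] ∩ ZP[x₁^{±1}, x₂, x'₂] = ZP[x₁, x'₁, x₂, x'₂]`. -/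
theorem rank_two_upper_eq_lower (R : Type*) [CommRing R] [IsDomain R]
    (q₁ r₁ q₂ r₂ : Rˣ) (b c : ℕ) (hb : 0 < b) (hc : 0 < c) :
    letI F := FractionRing (MvPolynomial (Fin 2) R)
    let x₁ : F := Xfrac R 2 0
    let x₂ : F := Xfrac R 2 1
    let x₁' : F := (algebraMap R F (q₂ : R) * x₂ ^ c + algebraMap R F (r₂ : R)) / x₁
    let x₂' : F := (algebraMap R F (q₁ : R) * x₁ ^ b + algebraMap R F (r₁ : R)) / x₂
    Algebra.adjoin R ({x₁, x₁', x₂, x₂⁻¹} : Set F) ⊓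
      Algebra.adjoin R ({x₁, x₁⁻¹, x₂, x₂'} : Set F) =
    Algebra.adjoin R ({x₁, x₁', x₂, x₂'} : Set F) :=
  rank_two_upper_eq_lower_general R q₁ r₁ q₂ r₂ b c hb
end

section
/- In the rank-2 setting, the cluster variable x''₂ defined by x₂x''₂ = q₃(x'₁)^b + r₃, where the coefficients satisfy r₁r₃ = q₁q₃r₂^b, belongs to ZP[x₁, x'₁, x₂, x'₂]; explicitly x''₂ = q₃r₁^{-1}(x'₁)^b x'₂ − q₁q₃r₁^{-1}((q₂x₂^c + r₂)^b − r₂^b)/x₂, and the last fraction is a polynomial in x₂. -/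
open MvPolynomial

theorem Xfrac_ne_zero (R : Type*) [CommRing R] [IsDomain R] (n : ℕ) (i : Fin n) :
    Xfrac R n i ≠ 0 :=
  (map_ne_zero_iff _ (IsFractionRing.injective _ _)).2 (MvPolynomial.X_ne_zero i)

theorem Polynomial.exists_aeval_sub_eval_zero_div_eq_aeval {R K : Type*} [CommRing R] [Field K]
    [Algebra R K] (p : Polynomial R) {x : K} (hx : x ≠ 0) :
    ∃ f : Polynomial R, (aeval x p - algebraMap R K (p.eval 0)) / x = aeval x f := by
  obtain ⟨f, hf⟩ := Polynomial.X_dvd_sub_C (p := p)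
  refine ⟨f, (div_eq_iff hx).2 ?_⟩
  have hfx := congrArg (aeval x) hf
  simp only [map_sub, aeval_C, map_mul, aeval_X] at hfx
  rw [← coeff_zero_eq_eval_zero, hfx, mul_comm]

theorem second_mutation_eq {F : Type*} [Field F] (q₁ r₁ r₂ q₃ r₃ x₁ x₂ y : F) (b : ℕ)
    (hx₁ : x₁ ≠ 0) (hr₁ : r₁ ≠ 0) (hcoef : r₁ * r₃ = q₁ * q₃ * r₂ ^ b) :
    (q₃ * (y / x₁) ^ b + r₃) / x₂ =
      q₃ * r₁⁻¹ * (y / x₁) ^ b * ((q₁ * x₁ ^ b + r₁) / x₂) -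
        q₁ * q₃ * r₁⁻¹ * ((y ^ b - r₂ ^ b) / x₂) := by
  have hnum : q₃ * (y / x₁) ^ b + r₃ =
      q₃ * r₁⁻¹ * (y / x₁) ^ b * (q₁ * x₁ ^ b + r₁) - q₁ * q₃ * r₁⁻¹ * (y ^ b - r₂ ^ b) := by
    rw [div_pow]
    field_simp
    linear_combination x₁ ^ b * hcoef
  rw [hnum]
  ring

theorem double_mutation_in_lower_bound_general (R : Type*) [CommRing R] [IsDomain R]
    (q₁ r₁ q₂ r₂ q₃ r₃ : Rˣ) (b c : ℕ) (hc : 0 < c)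
    (hcoef : (r₁ : R) * r₃ = (q₁ : R) * q₃ * (r₂ : R) ^ b) :
    letI F := FractionRing (MvPolynomial (Fin 2) R)
    let x₁ : F := Xfrac R 2 0
    let x₂ : F := Xfrac R 2 1
    let a : R → F := algebraMap R F
    let x₁' : F := (a (q₂ : R) * x₂ ^ c + a (r₂ : R)) / x₁
    let x₂' : F := (a (q₁ : R) * x₁ ^ b + a (r₁ : R)) / x₂
    let x₂'' : F := (a (q₃ : R) * x₁' ^ b + a (r₃ : R)) / x₂
    x₂'' ∈ Algebra.adjoin R ({x₁, x₁', x₂, x₂'} : Set F) ∧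
    x₂'' = a (q₃ : R) * (a (r₁ : R))⁻¹ * x₁' ^ b * x₂' -
      a (q₁ : R) * a (q₃ : R) * (a (r₁ : R))⁻¹ *
        (((a (q₂ : R) * x₂ ^ c + a (r₂ : R)) ^ b - a (r₂ : R) ^ b) / x₂) ∧
    ∃ f : Polynomial R,
      ((a (q₂ : R) * x₂ ^ c + a (r₂ : R)) ^ b - a (r₂ : R) ^ b) / x₂ =
        Polynomial.aeval x₂ f := by
  intro x₁ x₂ a x₁' x₂' x₂''
  have hx₂'' : x₂'' = _ :=
    second_mutation_eq (a q₁) (a r₁) (a r₂) (a q₃) (a r₃) x₁ x₂ _ b (Xfrac_ne_zero R 2 0)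
      (r₁.isUnit.map (algebraMap R _)).ne_zero
      (by simpa only [a, map_mul, map_pow] using congrArg a hcoef)
  obtain ⟨f, hf⟩ : ∃ f : Polynomial R,
      ((a q₂ * x₂ ^ c + a r₂) ^ b - a r₂ ^ b) / x₂ = Polynomial.aeval x₂ f := by
    have h := Polynomial.exists_aeval_sub_eval_zero_div_eq_aeval
      ((Polynomial.C (q₂ : R) * Polynomial.X ^ c + Polynomial.C (r₂ : R)) ^ b)
      (Xfrac_ne_zero R 2 1)
    simp only [map_pow, map_add, map_mul, Polynomial.aeval_C, Polynomial.aeval_X,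
      Polynomial.eval_pow, Polynomial.eval_add, Polynomial.eval_mul, Polynomial.eval_C,
      Polynomial.eval_X, zero_pow hc.ne', mul_zero, zero_add] at h
    exact h
  refine ⟨?_, hx₂'', f, hf⟩
  set S := Algebra.adjoin R {x₁, x₁', x₂, x₂'}
  have ha : ∀ r : R, a r ∈ S := S.algebraMap_mem
  have hx₁' : x₁' ∈ S := Algebra.subset_adjoin (by simp)
  have hx₂' : x₂' ∈ S := Algebra.subset_adjoin (by simp)
  have hfx₂ : Polynomial.aeval x₂ f ∈ S :=
    Algebra.adjoin_mono (by simp) (Polynomial.aeval_mem_adjoin_singleton R x₂)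
  rw [hx₂'', hf, ← map_units_inv (algebraMap R _)]
  exact sub_mem (mul_mem (mul_mem (mul_mem (ha _) (ha _)) (pow_mem hx₁' b)) hx₂')
    (mul_mem (mul_mem (mul_mem (ha _) (ha _)) (ha _)) hfx₂)

/-- In the rank-2 setting with exchange relations `x₁ x'₁ = q₂ x₂^c + r₂`,
`x₂ x'₂ = q₁ x₁^b + r₁`, and `x₂ x''₂ = q₃ (x'₁)^b + r₃` where `r₁ r₃ = q₁ q₃ r₂^b`,
the variable `x''₂` lies in `ZP[x₁, x'₁, x₂, x'₂]`; explicitly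
`x''₂ = q₃ r₁⁻¹ (x'₁)^b x'₂ − q₁ q₃ r₁⁻¹ ((q₂ x₂^c + r₂)^b − r₂^b)/x₂`, the last
fraction being a polynomial in `x₂`. -/
theorem double_mutation_in_lower_bound (R : Type*) [CommRing R] [IsDomain R]
    (q₁ r₁ q₂ r₂ q₃ r₃ : Rˣ) (b c : ℕ) (hb : 0 < b) (hc : 0 < c)
    (hcoef : (r₁ : R) * r₃ = (q₁ : R) * q₃ * (r₂ : R) ^ b) :
    letI F := FractionRing (MvPolynomial (Fin 2) R)
    let x₁ : F := Xfrac R 2 0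
    let x₂ : F := Xfrac R 2 1
    let a : R → F := algebraMap R F
    let x₁' : F := (a (q₂ : R) * x₂ ^ c + a (r₂ : R)) / x₁
    let x₂' : F := (a (q₁ : R) * x₁ ^ b + a (r₁ : R)) / x₂
    let x₂'' : F := (a (q₃ : R) * x₁' ^ b + a (r₃ : R)) / x₂
    x₂'' ∈ Algebra.adjoin R ({x₁, x₁', x₂, x₂'} : Set F) ∧
    x₂'' = a (q₃ : R) * (a (r₁ : R))⁻¹ * x₁' ^ b * x₂' -
      a (q₁ : R) * a (q₃ : R) * (a (r₁ : R))⁻¹ *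
        (((a (q₂ : R) * x₂ ^ c + a (r₂ : R)) ^ b - a (r₂ : R) ^ b) / x₂) ∧
    ∃ f : Polynomial R,
      ((a (q₂ : R) * x₂ ^ c + a (r₂ : R)) ^ b - a (r₂ : R) ^ b) / x₂ =
        Polynomial.aeval x₂ f :=
  double_mutation_in_lower_bound_general R q₁ r₁ q₂ r₂ q₃ r₃ b c hc hcoef
end

section
/- For the skew-symmetric 3×3 matrix B with rows (0, 2, −2), (−2, 0, 2), (2, −2, 0), every matrix mutation μ_k transforms B into −B; consequently, every matrix mutation-equivalent to B is ±B. -/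
/-- Matrix mutation in direction `k` for an integer square matrix. -/
def matrixMutationZ {n : ℕ} (B : Matrix (Fin n) (Fin n) ℤ) (k : Fin n) :
    Matrix (Fin n) (Fin n) ℤ :=
  fun i j =>
    if i = k ∨ j = k then -B i j
    else B i j + (|B i k| * B k j + B i k * |B k j|) / 2

private lemma mutB : ∀ k : Fin 3,
    matrixMutationZ (!![0, 2, -2; -2, 0, 2; 2, -2, 0] : Matrix (Fin 3) (Fin 3) ℤ) k
      = -(!![0, 2, -2; -2, 0, 2; 2, -2, 0] : Matrix (Fin 3) (Fin 3) ℤ) := by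
  intro k
  funext i j
  fin_cases k <;> fin_cases i <;> fin_cases j <;>
    simp [matrixMutationZ, Matrix.neg_apply] <;> decide

private lemma mutNB : ∀ k : Fin 3,
    matrixMutationZ (-(!![0, 2, -2; -2, 0, 2; 2, -2, 0] : Matrix (Fin 3) (Fin 3) ℤ)) k
      = (!![0, 2, -2; -2, 0, 2; 2, -2, 0] : Matrix (Fin 3) (Fin 3) ℤ) := by
  intro k
  funext i j
  fin_cases k <;> fin_cases i <;> fin_cases j <;>
    simp [matrixMutationZ, Matrix.neg_apply] <;> decide

/-- The Markov-type matrix `B = !![0,2,-2; -2,0,2; 2,-2,0]` satisfies `μ_k(B) = -B` for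
every `k`; consequently, every matrix mutation-equivalent to `B` equals `B` or `-B`. -/
theorem conway_matrix_mutation :
    (∀ k : Fin 3, matrixMutationZ (!![0, 2, -2; -2, 0, 2; 2, -2, 0] : Matrix (Fin 3) (Fin 3) ℤ) k
        = -(!![0, 2, -2; -2, 0, 2; 2, -2, 0] : Matrix (Fin 3) (Fin 3) ℤ)) ∧
    (∀ C : Matrix (Fin 3) (Fin 3) ℤ,
      Relation.ReflTransGen (fun X Y => ∃ k, Y = matrixMutationZ X k)
        (!![0, 2, -2; -2, 0, 2; 2, -2, 0] : Matrix (Fin 3) (Fin 3) ℤ) C →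
      C = (!![0, 2, -2; -2, 0, 2; 2, -2, 0] : Matrix (Fin 3) (Fin 3) ℤ) ∨
      C = -(!![0, 2, -2; -2, 0, 2; 2, -2, 0] : Matrix (Fin 3) (Fin 3) ℤ)) := by
  refine ⟨mutB, ?_⟩
  intro C h
  induction h with
  | refl => exact Or.inl rfl
  | tail _ hstep ih =>
    obtain ⟨k, rfl⟩ := hstep
    rcases ih with rfl | rfl
    · exact Or.inr (mutB k)
    · exact Or.inl (mutNB k)
end
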